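/- arXiv:2603.11885 — 4 statements merged into one kernel-verified Lean document; each statement's English description precedes it below -/
import Mathlib

section
/- For all real numbers α with 0 ≤ α < 2 and every constant C > 0 there exists a constant C' > 0 such that the following holds: for every finite simple graph G, if for every pair of distinct vertices u, v of G and every pair of disjoint vertex sets U ⊆ N(u)\{v} and V ⊆ N(v)\{u} the number of edges of G with one endpoint in U and the other endpoint in V is at most C·(|U|+|V|)^{2−α}, then the number of edges of G is at most C'·|V(G)|^{2−α/(α+1)}. -/
/-!
Suppose `G` has more than `D n` edges. Then some induced subgraph `H` has minimum degree at
least `D`, and `H` inherits the hypothesis. Count the walks `x a b y` in `H`, giving each one the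
weight `1 / (d(x) d(y))`. With `s(a) = ∑_{x ~ a} 1 / d(x)` this weighted count is
`∑_{a ~ b} s(a) s(b)`. Since `s t ≥ 1 + log s + log t`, and since Jensen's inequality for `log`
gives `∑_a d(a) log s(a) ≥ 0`, the count is at least `∑ d = 2 e(H)`.

To bound the count from above, group the walks by their ends `x, y`. Write the edges between
`N(x) \ {y}` and `N(y) \ {x}` as three pieces with disjoint sides. Two of the pieces are bounded
directly by the hypothesis; the third lies inside `N(x) ∩ N(y)`, and it has a cut carrying a
quarter of its ordered edge pairs. This gives at most `6 C (d(x) + d(y))^{2-α}` edges, so the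
count is at most `3 n + 48 C n ∑ d / D^{1+α}`. This is less than `∑ d` once `D^{1+α} ≥ 96 C n`
and `D > 6`. Hence `e(G) ≤ D n` for `D = (96 C + 7) n^{1/(1+α)}`.
-/

/-- The number of edges of `G` with one endpoint in `U` and the other endpoint in `W`
(counted via ordered pairs; for disjoint `U`, `W` each such edge is counted once). -/
noncomputable def edgesBetween {V : Type*} (G : SimpleGraph V) (U W : Set V) : ℕ :=
  {p : V × V | p.1 ∈ U ∧ p.2 ∈ W ∧ G.Adj p.1 p.2}.ncard

open Finset

theorem add_rpow_le_four_mul {a b p : ℝ} (ha : 0 ≤ a) (hb : 0 ≤ b) (hp₀ : 0 ≤ p) (hp₂ : p ≤ 2) :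
    (a + b) ^ p ≤ 4 * (a ^ p + b ^ p) := by
  have hmax : 0 ≤ max a b := le_max_of_le_left ha
  have htwo : (2 : ℝ) ^ p ≤ 4 := by
    calc (2 : ℝ) ^ p ≤ 2 ^ (2 : ℝ) := Real.rpow_le_rpow_of_exponent_le one_le_two hp₂
      _ = 4 := by norm_num [Real.rpow_two]
  calc (a + b) ^ p ≤ (2 * max a b) ^ p :=
        Real.rpow_le_rpow (by positivity) (by linarith [le_max_left a b, le_max_right a b]) hp₀
    _ = 2 ^ p * max (a ^ p) (b ^ p) := by
        rw [Real.mul_rpow zero_le_two hmax, Real.rpow_max ha hb hp₀]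
    _ ≤ 4 * (a ^ p + b ^ p) :=
        mul_le_mul htwo (max_le_add_of_nonneg (by positivity) (by positivity))
          (le_max_of_le_left (by positivity)) (by norm_num)

theorem inv_mul_rpow_le {d D α : ℝ} (hD : 0 < D) (hd : D ≤ d) (hα : 0 ≤ α) :
    d⁻¹ * d ^ (2 - α) ≤ D ^ (-α) * d := by
  have hd₀ : 0 < d := hD.trans_le hd
  have hsplit : d⁻¹ * d ^ (2 - α) = d ^ (-α) * d := by
    rw [sub_eq_add_neg, Real.rpow_add hd₀, Real.rpow_two]
    field_simp
  rw [hsplit]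
  exact mul_le_mul_of_nonneg_right (Real.rpow_le_rpow_of_nonpos hD hd (neg_nonpos.2 hα)) hd₀.le

theorem inv_mul_inv_mul_add_rpow_le {x y D α : ℝ} (hD : 0 < D) (hx : D ≤ x) (hy : D ≤ y)
    (hα₀ : 0 ≤ α) (hα₂ : α ≤ 2) :
    x⁻¹ * y⁻¹ * (x + y) ^ (2 - α) ≤ 4 * D ^ (-α) * (x * y⁻¹ + x⁻¹ * y) := by
  have hx₀ : 0 < x := hD.trans_le hx
  have hy₀ : 0 < y := hD.trans_le hy
  calc x⁻¹ * y⁻¹ * (x + y) ^ (2 - α)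
      ≤ x⁻¹ * y⁻¹ * (4 * (x ^ (2 - α) + y ^ (2 - α))) := by
        have := add_rpow_le_four_mul hx₀.le hy₀.le (by linarith : 0 ≤ 2 - α) (by linarith)
        gcongr
    _ = 4 * (y⁻¹ * (x⁻¹ * x ^ (2 - α)) + x⁻¹ * (y⁻¹ * y ^ (2 - α))) := by ring
    _ ≤ 4 * (y⁻¹ * (D ^ (-α) * x) + x⁻¹ * (D ^ (-α) * y)) := by
        have := inv_mul_rpow_le hD hx hα₀
        have := inv_mul_rpow_le hD hy hα₀
        gcongr 4 * (_ * ?_ + _ * ?_)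
    _ = 4 * D ^ (-α) * (x * y⁻¹ + x⁻¹ * y) := by ring

theorem sum_inv_mul_add_rpow_le {ι : Type*} [Fintype ι] (d : ι → ℝ) {D α : ℝ} (hD : 0 < D)
    (hd : ∀ i, D ≤ d i) (hα₀ : 0 ≤ α) (hα₂ : α ≤ 2) :
    ∑ i, ∑ j, (d i)⁻¹ * (d j)⁻¹ * (d i + d j) ^ (2 - α) ≤
      8 * Fintype.card ι * (∑ i, d i) / D ^ (1 + α) := by
  have hd₀ : ∀ i, 0 < d i := fun i ↦ hD.trans_le (hd i)
  have hinv_sum : ∑ i, (d i)⁻¹ ≤ Fintype.card ι * D⁻¹ := by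
    simpa using sum_le_sum fun i (_ : i ∈ univ) ↦ inv_anti₀ hD (hd i)
  have hpow : D ^ (-α) * D⁻¹ = (D ^ (1 + α))⁻¹ := by
    rw [Real.rpow_add hD, Real.rpow_one, Real.rpow_neg hD.le, mul_inv, mul_comm]
  calc ∑ i, ∑ j, (d i)⁻¹ * (d j)⁻¹ * (d i + d j) ^ (2 - α)
      ≤ ∑ i, ∑ j, 4 * D ^ (-α) * (d i * (d j)⁻¹ + (d i)⁻¹ * d j) :=
        sum_le_sum fun i _ ↦ sum_le_sum fun j _ ↦
          inv_mul_inv_mul_add_rpow_le hD (hd i) (hd j) hα₀ hα₂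
    _ = 4 * D ^ (-α) * ((∑ i, d i) * (∑ j, (d j)⁻¹) + (∑ i, (d i)⁻¹) * ∑ j, d j) := by
        rw [sum_mul_sum, sum_mul_sum, ← sum_add_distrib, mul_sum]
        simp_rw [← sum_add_distrib, mul_sum]
    _ = 8 * D ^ (-α) * ((∑ i, d i) * ∑ i, (d i)⁻¹) := by ring
    _ ≤ 8 * D ^ (-α) * ((∑ i, d i) * (Fintype.card ι * D⁻¹)) := by
        gcongr
        exact sum_nonneg fun i _ ↦ (hd₀ i).le
    _ = _ := by
        rw [div_eq_mul_inv, ← hpow]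
        ring

namespace SimpleGraph

variable {V V' : Type*}

def HasSparseSubBineighborhoods (G : SimpleGraph V) (f : ℕ → ℝ) : Prop :=
  ∀ u v, u ≠ v → ∀ U W : Set V, U ⊆ G.neighborSet u \ {v} → W ⊆ G.neighborSet v \ {u} →
    Disjoint U W → (edgesBetween G U W : ℝ) ≤ f (U.ncard + W.ncard)

theorem HasSparseSubBineighborhoods.comap [Finite V'] {H : SimpleGraph V} {G : SimpleGraph V'}
    {f : ℕ → ℝ} (e : H ↪g G) (h : G.HasSparseSubBineighborhoods f) :
    H.HasSparseSubBineighborhoods f := by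
  intro u v huv U W hU hW hUW
  have image_subset : ∀ {x y : V} {X : Set V}, X ⊆ H.neighborSet x \ {y} →
      e '' X ⊆ G.neighborSet (e x) \ {e y} := by
    rintro x y X hX _ ⟨z, hz, rfl⟩
    exact ⟨e.map_adj_iff.2 (hX hz).1, e.injective.ne (hX hz).2⟩
  have hG := h (e u) (e v) (e.injective.ne huv) (e '' U) (e '' W) (image_subset hU)
    (image_subset hW) ((Set.disjoint_image_iff e.injective).2 hUW)
  rw [Set.ncard_image_of_injective _ e.injective, Set.ncard_image_of_injective _ e.injective] at hG
  have hpairs : edgesBetween H U W ≤ edgesBetween G (e '' U) (e '' W) :=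
    Set.ncard_le_ncard_of_injOn (Prod.map e e)
      (fun _ ⟨hp₁, hp₂, hp⟩ ↦ ⟨Set.mem_image_of_mem e hp₁, Set.mem_image_of_mem e hp₂,
        e.map_adj_iff.2 hp⟩)
      (e.injective.prodMap e.injective).injOn
  exact (Nat.cast_le.2 hpairs).trans hG

theorem edgesBetween_coe_finset (G : SimpleGraph V) [DecidableRel G.Adj] (X Y : Finset V) :
    edgesBetween G X Y = #(G.interedges X Y) := by
  rw [edgesBetween, ← Set.ncard_coe_finset]
  congr 1
  ext
  simp [mem_interedges_iff]

theorem card_interedges_comm (G : SimpleGraph V) [DecidableRel G.Adj] (s t : Finset V) :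
    #(G.interedges s t) = #(G.interedges t s) :=
  have := G.symm
  Rel.card_interedges_comm s t

section Interedges

variable [DecidableEq V] (G : SimpleGraph V) [DecidableRel G.Adj]

theorem card_interedges_union_left {s₁ s₂ : Finset V} (hs : Disjoint s₁ s₂) (t : Finset V) :
    #(G.interedges (s₁ ∪ s₂) t) = #(G.interedges s₁ t) + #(G.interedges s₂ t) := by
  rw [← card_union_of_disjoint (G.interedges_disjoint_left hs t)]
  simp only [interedges_def, union_product, filter_union]

theorem card_interedges_union_right (s : Finset V) {t₁ t₂ : Finset V} (ht : Disjoint t₁ t₂) :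
    #(G.interedges s (t₁ ∪ t₂)) = #(G.interedges s t₁) + #(G.interedges s t₂) := by
  rw [← card_union_of_disjoint (G.interedges_disjoint_right s ht)]
  simp only [interedges_def, product_union, filter_union]

theorem card_interedges_eq_sum [Fintype V] (s t : Finset V) :
    #(G.interedges s t) = ∑ a ∈ s, #(G.neighborFinset a ∩ t) := by
  induction s using Finset.induction_on with
  | empty => simp [interedges_def]
  | insert a s ha ih =>
    rw [insert_eq, G.card_interedges_union_left (disjoint_singleton_left.2 ha), ih,
      sum_union (disjoint_singleton_left.2 ha), sum_singleton]
    congr 1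
    have hstar : G.interedges {a} t = {a} ×ˢ (G.neighborFinset a ∩ t) := by
      ext ⟨b, c⟩
      simp only [mem_interedges_iff, mem_singleton, mem_product, mem_inter, mem_neighborFinset]
      grind
    rw [hstar, card_product, card_singleton, one_mul]

theorem card_interedges_insert_self {a : V} {s : Finset V} (ha : a ∉ s) :
    #(G.interedges (insert a s) (insert a s)) =
      #(G.interedges s s) + 2 * #(G.interedges {a} s) := by
  have hdisj : Disjoint {a} s := disjoint_singleton_left.2 ha
  have hloop : G.interedges {a} {a} = ∅ := by simp [interedges_def]
  rw [insert_eq, G.card_interedges_union_left hdisj, G.card_interedges_union_right _ hdisj,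
    G.card_interedges_union_right _ hdisj, hloop, G.card_interedges_comm s {a}, card_empty]
  ring

/-- As `interedges s s` counts every edge twice, this says that some cut carries half the edges.
Add the vertices one at a time, each to the side across from which it has more neighbours. -/
theorem exists_card_interedges_self_le_four_mul (s : Finset V) :
    ∃ t ⊆ s, #(G.interedges s s) ≤ 4 * #(G.interedges t (s \ t)) := by
  induction s using Finset.induction_on with
  | empty => exact ⟨∅, subset_rfl, by simp [interedges_def]⟩
  | insert x s hx ih =>
    obtain ⟨t, hts, ht⟩ := ih
    have hxt : x ∉ t := fun h ↦ hx (hts h)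
    have hsplit :
        #(G.interedges {x} s) = #(G.interedges {x} t) + #(G.interedges {x} (s \ t)) := by
      rw [← G.card_interedges_union_right _ disjoint_sdiff, union_sdiff_of_subset hts]
    have hkeep : #(G.interedges t (insert x s \ t)) =
        #(G.interedges t (s \ t)) + #(G.interedges {x} t) := by
      rw [insert_sdiff_of_notMem _ hxt, insert_eq,
        G.card_interedges_union_right _ (disjoint_singleton_left.2 (fun h ↦ hx (sdiff_subset h))),
        G.card_interedges_comm t {x}, add_comm]
    have hmove : #(G.interedges (insert x t) (insert x s \ insert x t)) =
        #(G.interedges t (s \ t)) + #(G.interedges {x} (s \ t)) := by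
      rw [insert_sdiff_insert, sdiff_insert_of_notMem hx, insert_eq,
        G.card_interedges_union_left (disjoint_singleton_left.2 hxt), add_comm]
    rw [G.card_interedges_insert_self hx, hsplit]
    by_cases hx' : #(G.interedges {x} (s \ t)) ≤ #(G.interedges {x} t)
    · exact ⟨t, hts.trans (subset_insert x s), by omega⟩
    · exact ⟨insert x t, insert_subset_insert x hts, by omega⟩

end Interedges

section Finite

variable [Fintype V] [DecidableEq V] {G : SimpleGraph V} [DecidableRel G.Adj] {f : ℕ → ℝ}

theorem HasSparseSubBineighborhoods.card_interedges_le (h : G.HasSparseSubBineighborhoods f)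
    {u v : V} (huv : u ≠ v) {X Y : Finset V} (hX : X ⊆ (G.neighborFinset u).erase v)
    (hY : Y ⊆ (G.neighborFinset v).erase u) (hXY : Disjoint X Y) :
    (#(G.interedges X Y) : ℝ) ≤ f (#X + #Y) := by
  have coe_subset : ∀ {x y : V} {Z : Finset V}, Z ⊆ (G.neighborFinset x).erase y →
      (Z : Set V) ⊆ G.neighborSet x \ {y} := fun hZ z hz ↦ by simpa [and_comm] using hZ hz
  simpa [edgesBetween_coe_finset] using
    h u v huv X Y (coe_subset hX) (coe_subset hY) (disjoint_coe.2 hXY)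

theorem HasSparseSubBineighborhoods.card_interedges_le_six_mul
    (h : G.HasSparseSubBineighborhoods f) (hf : Monotone f) {u v : V} (huv : u ≠ v)
    {A B : Finset V} (hA : A ⊆ (G.neighborFinset u).erase v)
    (hB : B ⊆ (G.neighborFinset v).erase u) :
    (#(G.interedges A B) : ℝ) ≤ 6 * f (#A + #B) := by
  have hpart : ∀ {X Y : Finset V}, X ⊆ A → Y ⊆ B → Disjoint X Y →
      (#(G.interedges X Y) : ℝ) ≤ f (#A + #B) := fun hX hY hXY ↦
    (h.card_interedges_le huv (hX.trans hA) (hY.trans hB) hXY).trans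
      (hf (add_le_add (card_le_card hX) (card_le_card hY)))
  have hsplitA :
      #(G.interedges A B) = #(G.interedges (A \ B) B) + #(G.interedges (A ∩ B) B) := by
    rw [← G.card_interedges_union_left (disjoint_sdiff_inter A B), sdiff_union_inter]
  have hsplitB : #(G.interedges (A ∩ B) B) =
      #(G.interedges (A ∩ B) (B \ A)) + #(G.interedges (A ∩ B) (A ∩ B)) := by
    rw [← G.card_interedges_union_right _ (inter_comm A B ▸ disjoint_sdiff_inter B A),
      inter_comm A B, sdiff_union_inter]
  obtain ⟨T, hT, hcut⟩ := G.exists_card_interedges_self_le_four_mul (A ∩ B)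
  have hcutR : (#(G.interedges (A ∩ B) (A ∩ B)) : ℝ) ≤ 4 * #(G.interedges T ((A ∩ B) \ T)) := by
    exact_mod_cast hcut
  have h₁ := hpart sdiff_subset subset_rfl sdiff_disjoint
  have h₂ := hpart (X := A ∩ B) inter_subset_left sdiff_subset
    (disjoint_sdiff.mono_left inter_subset_left)
  have h₃ := hpart (Y := (A ∩ B) \ T) (hT.trans inter_subset_left)
    (sdiff_subset.trans inter_subset_right) disjoint_sdiff
  rw [hsplitA, hsplitB]
  push_cast
  linarith

theorem HasSparseSubBineighborhoods.card_interedges_neighborFinset_erase_le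
    (h : G.HasSparseSubBineighborhoods f) (hf : Monotone f) {u v : V} (huv : u ≠ v) :
    (#(G.interedges ((G.neighborFinset u).erase v) ((G.neighborFinset v).erase u)) : ℝ) ≤
      6 * f (G.degree u + G.degree v) := by
  refine (h.card_interedges_le_six_mul hf huv subset_rfl subset_rfl).trans ?_
  gcongr 6 * ?_
  exact hf (add_le_add (card_erase_le.trans_eq (card_neighborFinset_eq_degree ..))
    (card_erase_le.trans_eq (card_neighborFinset_eq_degree ..)))

variable (G)

theorem degree_induce_coe_finset (s : Finset V) (v : (s : Set V)) :
    (G.induce (s : Set V)).degree v = #(G.neighborFinset v ∩ s) := by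
  rw [← card_neighborFinset_eq_degree, ← card_map (.subtype _)]
  convert congrArg card (map_neighborFinset_induce (G := G) v) using 2 <;> ext <;> simp

theorem exists_nonempty_le_degree_induce {D : ℝ} (h : D * Fintype.card V < #G.edgeFinset) :
    ∃ s : Finset V, s.Nonempty ∧ ∀ v : (s : Set V), D ≤ (G.induce (s : Set V)).degree v := by
  set φ : Finset V → ℝ := fun s ↦ #(G.interedges s s) - 2 * D * #s
  obtain ⟨s, -, hmax⟩ := exists_max_image univ.powerset φ ⟨univ, mem_powerset_self _⟩
  have huniv : #(G.interedges univ univ) = 2 * #G.edgeFinset := by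
    rw [card_interedges_eq_sum, ← sum_degrees_eq_twice_card_edges]
    simp
  have hs : 0 < φ s := by
    have := hmax univ (mem_powerset_self _)
    simp only [φ, huniv, card_univ] at this
    push_cast at this
    linarith
  refine ⟨s, nonempty_iff_ne_empty.2 ?_, fun ⟨v, hv⟩ ↦ ?_⟩
  · rintro rfl
    simp [φ, interedges_def] at hs
  -- deleting a vertex of degree less than `D` from `s` would increase `φ`
  have hv : v ∈ s := hv
  have herase := hmax (s.erase v) (mem_powerset.2 (subset_univ _))
  have hins := G.card_interedges_insert_self (notMem_erase v s)
  rw [insert_erase hv] at hins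
  have hdeg : #(G.interedges {v} (s.erase v)) = (G.induce (s : Set V)).degree ⟨v, hv⟩ := by
    rw [card_interedges_eq_sum, sum_singleton, degree_induce_coe_finset, inter_erase,
      erase_eq_of_notMem (by simp)]
  simp only [φ, hins, card_erase_of_mem hv, hdeg] at herase
  rw [Nat.cast_sub (card_pos.2 ⟨v, hv⟩)] at herase
  push_cast at herase
  linarith

end Finite

section NeighborSums

variable [Fintype V] (G : SimpleGraph V) [DecidableRel G.Adj]

theorem sum_sum_neighborFinset_comm {M : Type*} [AddCommMonoid M] (F : V → V → M) :
    ∑ x, ∑ a ∈ G.neighborFinset x, F x a = ∑ a, ∑ x ∈ G.neighborFinset a, F x a :=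
  sum_comm' fun x a ↦ by simp [adj_comm]

theorem sum_sum_neighborFinset {M : Type*} [AddCommMonoid M] (g : V → M) :
    ∑ x, ∑ y ∈ G.neighborFinset x, g y = ∑ y, G.degree y • g y := by
  rw [sum_sum_neighborFinset_comm]
  simp [sum_const, card_neighborFinset_eq_degree]

theorem sum_inv_degree_pos (hpos : ∀ v, 0 < G.degree v) (a : V) :
    0 < ∑ x ∈ G.neighborFinset a, ((G.degree x : ℝ))⁻¹ :=
  sum_pos (fun x _ ↦ by simp [hpos x]) (by simpa [← card_pos] using hpos a)

theorem sum_degree_mul_log_sum_inv_degree_nonneg (hpos : ∀ v, 0 < G.degree v) :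
    0 ≤ ∑ a, (G.degree a : ℝ) * Real.log (∑ x ∈ G.neighborFinset a, ((G.degree x : ℝ))⁻¹) := by
  have hjensen : ∀ a, (G.degree a : ℝ) * Real.log (G.degree a) -
      ∑ x ∈ G.neighborFinset a, Real.log (G.degree x) ≤
        (G.degree a : ℝ) * Real.log (∑ x ∈ G.neighborFinset a, ((G.degree x : ℝ))⁻¹) := by
    intro a
    have hd : (0 : ℝ) < G.degree a := by exact_mod_cast hpos a
    have h := strictConcaveOn_log_Ioi.concaveOn.le_map_sum (t := G.neighborFinset a)
      (w := fun _ ↦ ((G.degree a : ℝ))⁻¹) (p := fun x ↦ ((G.degree x : ℝ))⁻¹)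
      (fun _ _ ↦ by positivity) (by simp [hd.ne']) (fun x _ ↦ by simp [hpos x])
    simp only [smul_eq_mul, ← mul_sum, Real.log_inv, sum_neg_distrib] at h
    rw [Real.log_mul (inv_ne_zero hd.ne') (G.sum_inv_degree_pos hpos a).ne', Real.log_inv] at h
    have h' := mul_le_mul_of_nonneg_left h hd.le
    rw [← mul_assoc, mul_inv_cancel₀ hd.ne', one_mul, mul_add] at h'
    linarith
  have hzero : ∑ a, ((G.degree a : ℝ) * Real.log (G.degree a) -
      ∑ x ∈ G.neighborFinset a, Real.log (G.degree x)) = 0 := by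
    rw [sum_sub_distrib, sum_sum_neighborFinset]
    simp
  exact hzero.symm.le.trans (sum_le_sum fun a _ ↦ hjensen a)

end NeighborSums

section WeightedWalks

variable [Fintype V] [DecidableEq V] (G : SimpleGraph V) [DecidableRel G.Adj]

theorem sum_mul_card_interedges_neighborFinset_right (A : Finset V) (w : V → ℝ) :
    ∑ y, w y * #(G.interedges A (G.neighborFinset y)) =
      ∑ a ∈ A, ∑ b ∈ G.neighborFinset a, ∑ y ∈ G.neighborFinset b, w y := by
  have hcount : ∀ a y, (#(G.neighborFinset a ∩ G.neighborFinset y) : ℝ) =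
      ∑ b ∈ G.neighborFinset a, if y ∈ G.neighborFinset b then 1 else 0 := by
    intro a y
    rw [sum_boole, ← filter_mem_eq_inter]
    simp [adj_comm]
  simp_rw [card_interedges_eq_sum, Nat.cast_sum, hcount, mul_sum]
  rw [sum_comm]
  refine sum_congr rfl fun a _ ↦ ?_
  rw [sum_comm]
  refine sum_congr rfl fun b _ ↦ ?_
  simp [← sum_filter, neighborFinset_eq_filter]

theorem sum_mul_card_interedges_neighborFinset (w : V → ℝ) :
    ∑ x, ∑ y, w x * w y * #(G.interedges (G.neighborFinset x) (G.neighborFinset y)) =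
      ∑ a, ∑ b ∈ G.neighborFinset a,
        (∑ x ∈ G.neighborFinset a, w x) * ∑ y ∈ G.neighborFinset b, w y := by
  simp_rw [mul_assoc, ← mul_sum, sum_mul_card_interedges_neighborFinset_right, mul_sum]
  rw [sum_sum_neighborFinset_comm]
  refine sum_congr rfl fun a _ ↦ ?_
  rw [sum_comm]
  refine sum_congr rfl fun b _ ↦ ?_
  rw [sum_comm, sum_congr rfl fun y _ ↦ (sum_mul ..).symm]

theorem sum_degree_le_sum_inv_mul_card_interedges (hpos : ∀ v, 0 < G.degree v) :
    ∑ v, (G.degree v : ℝ) ≤ ∑ x, ∑ y, ((G.degree x : ℝ))⁻¹ * ((G.degree y : ℝ))⁻¹ *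
      #(G.interedges (G.neighborFinset x) (G.neighborFinset y)) := by
  set s : V → ℝ := fun a ↦ ∑ x ∈ G.neighborFinset a, ((G.degree x : ℝ))⁻¹
  have hs : ∀ a, 0 < s a := G.sum_inv_degree_pos hpos
  have hexp : ∀ a b, 1 + Real.log (s a) + Real.log (s b) ≤ s a * s b := fun a b ↦ by
    have := Real.add_one_le_exp (Real.log (s a) + Real.log (s b))
    rw [Real.exp_add, Real.exp_log (hs a), Real.exp_log (hs b)] at this
    linarith
  have hsum : ∑ a, ∑ b ∈ G.neighborFinset a, (1 + Real.log (s a) + Real.log (s b)) =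
      ∑ a, (G.degree a : ℝ) + 2 * ∑ a, G.degree a * Real.log (s a) := by
    simp only [sum_add_distrib, sum_sum_neighborFinset, sum_const, card_neighborFinset_eq_degree,
      nsmul_eq_mul, mul_one]
    ring
  rw [sum_mul_card_interedges_neighborFinset]
  calc ∑ v, (G.degree v : ℝ)
      ≤ ∑ a, ∑ b ∈ G.neighborFinset a, (1 + Real.log (s a) + Real.log (s b)) := by
        rw [hsum]
        linarith [G.sum_degree_mul_log_sum_inv_degree_nonneg hpos]
    _ ≤ _ := sum_le_sum fun a _ ↦ sum_le_sum fun b _ ↦ hexp a b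

theorem card_interedges_neighborFinset_le (x y : V) :
    #(G.interedges (G.neighborFinset x) (G.neighborFinset y)) ≤
      #(G.interedges ((G.neighborFinset x).erase y) ((G.neighborFinset y).erase x)) +
        if G.Adj x y then G.degree x + G.degree y else 0 := by
  split_ifs with hadj
  · have hsub : G.interedges (G.neighborFinset x) (G.neighborFinset y) ⊆
        G.interedges ((G.neighborFinset x).erase y) ((G.neighborFinset y).erase x) ∪
          ({y} ×ˢ G.neighborFinset y ∪ G.neighborFinset x ×ˢ {x}) := by
      rintro ⟨a, b⟩ h
      simp only [mem_interedges_iff, mem_union, mem_product, mem_singleton, mem_erase] at h ⊢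
      grind
    refine (card_le_card hsub).trans ((card_union_le _ _).trans (add_le_add le_rfl ?_))
    refine (card_union_le _ _).trans ?_
    simp [card_neighborFinset_eq_degree, add_comm]
  · rw [erase_eq_of_notMem (by simpa using hadj),
      erase_eq_of_notMem (by simpa [adj_comm] using hadj), add_zero]

theorem inv_mul_inv_mul_card_interedges_le (hpos : ∀ v, 0 < G.degree v) (g : V → V → ℝ)
    (hg : ∀ x y, x ≠ y →
      (#(G.interedges ((G.neighborFinset x).erase y) ((G.neighborFinset y).erase x)) : ℝ) ≤
        g x y)
    (hg₀ : ∀ x, 0 ≤ g x x) (x y : V) :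
    ((G.degree x : ℝ))⁻¹ * ((G.degree y : ℝ))⁻¹ *
        #(G.interedges (G.neighborFinset x) (G.neighborFinset y)) ≤
      ((if x = y then 1 else 0) +
        if G.Adj x y then ((G.degree x : ℝ))⁻¹ + ((G.degree y : ℝ))⁻¹ else 0) +
      ((G.degree x : ℝ))⁻¹ * ((G.degree y : ℝ))⁻¹ * g x y := by
  set w : V → ℝ := fun v ↦ ((G.degree v : ℝ))⁻¹
  have hw : ∀ v, w v * G.degree v = 1 := fun v ↦ inv_mul_cancel₀ (by simp [(hpos v).ne'])
  have hw₀ : ∀ v, 0 ≤ w v := fun v ↦ by positivity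
  rcases eq_or_ne x y with rfl | hxy
  · have hcard : (#(G.interedges (G.neighborFinset x) (G.neighborFinset x)) : ℝ) ≤
        G.degree x * G.degree x := by
      exact_mod_cast (G.card_interedges_le_mul _ _).trans_eq (by simp)
    have := mul_le_mul_of_nonneg_left hcard (mul_nonneg (hw₀ x) (hw₀ x))
    have := mul_nonneg (mul_nonneg (hw₀ x) (hw₀ x)) (hg₀ x)
    simp only [if_true, G.loopless.irrefl x, if_false, add_zero]
    nlinarith [hw x]
  · have hcard : (#(G.interedges (G.neighborFinset x) (G.neighborFinset y)) : ℝ) ≤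
        g x y + if G.Adj x y then (G.degree x : ℝ) + G.degree y else 0 := by
      refine (Nat.cast_le.2 (G.card_interedges_neighborFinset_le x y)).trans ?_
      push_cast [Nat.cast_ite]
      linarith [hg x y hxy]
    refine (mul_le_mul_of_nonneg_left hcard (mul_nonneg (hw₀ x) (hw₀ y))).trans_eq ?_
    split_ifs
    · linear_combination w y * hw x + w x * hw y
    · ring

theorem sum_inv_mul_card_interedges_le (hpos : ∀ v, 0 < G.degree v) (g : V → V → ℝ)
    (hg : ∀ x y, x ≠ y →
      (#(G.interedges ((G.neighborFinset x).erase y) ((G.neighborFinset y).erase x)) : ℝ) ≤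
        g x y)
    (hg₀ : ∀ x, 0 ≤ g x x) :
    ∑ x, ∑ y, ((G.degree x : ℝ))⁻¹ * ((G.degree y : ℝ))⁻¹ *
        #(G.interedges (G.neighborFinset x) (G.neighborFinset y)) ≤
      3 * Fintype.card V + ∑ x, ∑ y, ((G.degree x : ℝ))⁻¹ * ((G.degree y : ℝ))⁻¹ * g x y := by
  set w : V → ℝ := fun v ↦ ((G.degree v : ℝ))⁻¹
  have hdeg : ∑ v, (G.degree v : ℝ) * w v = Fintype.card V := by
    simp [w, (hpos _).ne']
  have hadj : ∑ x, ∑ y, (if G.Adj x y then w x + w y else 0) = 2 * Fintype.card V := by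
    simp_rw [← sum_filter, ← neighborFinset_eq_filter, sum_add_distrib, sum_sum_neighborFinset,
      sum_const, card_neighborFinset_eq_degree, nsmul_eq_mul, hdeg]
    ring
  calc _ ≤ ∑ x, ∑ y, (((if x = y then 1 else 0) + if G.Adj x y then w x + w y else 0) +
        w x * w y * g x y) := sum_le_sum fun x _ ↦ sum_le_sum fun y _ ↦
          G.inv_mul_inv_mul_card_interedges_le hpos g hg hg₀ x y
    _ = _ := by
      simp only [sum_add_distrib, hadj, sum_ite_eq, mem_univ, if_true, sum_const, card_univ,
        nsmul_eq_mul, mul_one]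
      ring

end WeightedWalks

theorem HasSparseSubBineighborhoods.isEmpty_of_le_degree [Fintype V] [DecidableEq V]
    {G : SimpleGraph V} [DecidableRel G.Adj] {C α D : ℝ}
    (h : G.HasSparseSubBineighborhoods fun k ↦ C * (k : ℝ) ^ (2 - α)) (hC : 0 ≤ C)
    (hα₀ : 0 ≤ α) (hα₂ : α ≤ 2) (hD : 6 < D) (hdeg : ∀ v, D ≤ G.degree v)
    (hcard : 96 * C * Fintype.card V ≤ D ^ (1 + α)) : IsEmpty V := by
  have hpos : ∀ v, 0 < G.degree v := fun v ↦ by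
    exact_mod_cast (by linarith [hdeg v] : (0 : ℝ) < G.degree v)
  have hmono : Monotone fun k : ℕ ↦ C * (k : ℝ) ^ (2 - α) := fun a b hab ↦
    mul_le_mul_of_nonneg_left (Real.rpow_le_rpow (Nat.cast_nonneg a) (Nat.cast_le.2 hab)
      (by linarith)) hC
  set n : ℝ := (Fintype.card V : ℝ)
  set S : ℝ := ∑ v, (G.degree v : ℝ)
  have hlow := G.sum_degree_le_sum_inv_mul_card_interedges hpos
  have hup := G.sum_inv_mul_card_interedges_le hpos
    (fun x y ↦ 6 * (C * ((G.degree x + G.degree y : ℕ) : ℝ) ^ (2 - α)))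
    (fun x y hxy ↦ by exact_mod_cast h.card_interedges_neighborFinset_erase_le hmono hxy)
    (fun x ↦ by positivity)
  have harith := sum_inv_mul_add_rpow_le (fun v ↦ (G.degree v : ℝ)) (by linarith) hdeg hα₀ hα₂
  have hwalk : ∑ x, ∑ y, ((G.degree x : ℝ))⁻¹ * ((G.degree y : ℝ))⁻¹ *
      (6 * (C * ((G.degree x + G.degree y : ℕ) : ℝ) ^ (2 - α))) ≤ S / 2 := by
    have hS : 0 ≤ S := sum_nonneg fun v _ ↦ Nat.cast_nonneg _
    have hDpow : 0 < D ^ (1 + α) := Real.rpow_pos_of_pos (by linarith) _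
    calc _ = 6 * C * ∑ x, ∑ y, ((G.degree x : ℝ))⁻¹ * ((G.degree y : ℝ))⁻¹ *
          ((G.degree x : ℝ) + G.degree y) ^ (2 - α) := by
          rw [mul_sum]
          refine sum_congr rfl fun x _ ↦ ?_
          rw [mul_sum]
          refine sum_congr rfl fun y _ ↦ ?_
          push_cast
          ring
      _ ≤ 6 * C * (8 * n * S / D ^ (1 + α)) := mul_le_mul_of_nonneg_left harith (by positivity)
      _ ≤ S / 2 := by
          rw [mul_div_assoc', div_le_iff₀ hDpow]
          nlinarith
  have hSD : D * n ≤ S := by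
    simpa [n, S, mul_comm] using sum_le_sum fun v (_ : v ∈ univ) ↦ hdeg v
  have hn : n ≤ 0 := by nlinarith
  exact Fintype.card_eq_zero_iff.1 (Nat.cast_eq_zero.1 (hn.antisymm (Nat.cast_nonneg _)))

theorem HasSparseSubBineighborhoods.card_edgeFinset_le [Fintype V] [DecidableEq V]
    {G : SimpleGraph V} [DecidableRel G.Adj] {C α D : ℝ}
    (h : G.HasSparseSubBineighborhoods fun k ↦ C * (k : ℝ) ^ (2 - α)) (hC : 0 ≤ C)
    (hα₀ : 0 ≤ α) (hα₂ : α ≤ 2) (hD : 6 < D) (hcard : 96 * C * Fintype.card V ≤ D ^ (1 + α)) :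
    (#G.edgeFinset : ℝ) ≤ D * Fintype.card V := by
  by_contra! hlt
  obtain ⟨s, hs, hdeg⟩ := G.exists_nonempty_le_degree_induce hlt
  have hcard_s : 96 * C * Fintype.card (s : Set V) ≤ D ^ (1 + α) := le_trans (by
    gcongr
    exact Nat.cast_le.2 (Fintype.card_le_of_injective _ Subtype.val_injective)) hcard
  exact ((h.comap (Embedding.induce _)).isEmpty_of_le_degree hC hα₀ hα₂ hD hdeg hcard_s).false
    ⟨_, hs.choose_spec⟩

end SimpleGraph

open SimpleGraph in
theorem stmt0 (α C : ℝ) (hα0 : 0 ≤ α) (hα2 : α < 2) (hC : 0 < C) :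
    ∃ C' : ℝ, 0 < C' ∧
      ∀ (V : Type) [Fintype V] (G : SimpleGraph V),
        (∀ u v : V, u ≠ v → ∀ U W : Set V,
            U ⊆ G.neighborSet u \ {v} → W ⊆ G.neighborSet v \ {u} → Disjoint U W →
            (edgesBetween G U W : ℝ) ≤ C * ((U.ncard + W.ncard : ℕ) : ℝ) ^ (2 - α)) →
        (G.edgeSet.ncard : ℝ) ≤ C' * (Fintype.card V : ℝ) ^ (2 - α / (α + 1)) := by
  classical
  refine ⟨96 * C + 7, by positivity, fun V _ G hG ↦ ?_⟩
  rcases isEmpty_or_nonempty V with hV | hV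
  · simp [Set.eq_empty_of_isEmpty G.edgeSet]
    positivity
  set n : ℝ := (Fintype.card V : ℝ)
  have hn : 1 ≤ n := Nat.one_le_cast.2 Fintype.card_pos
  have hnt : 1 ≤ n ^ (α + 1)⁻¹ := Real.one_le_rpow hn (by positivity)
  have hC' : 96 * C + 7 ≤ (96 * C + 7) ^ (α + 1) :=
    Real.self_le_rpow_of_one_le (by linarith) (by linarith)
  have hedges := HasSparseSubBineighborhoods.card_edgeFinset_le hG hC.le hα0 hα2.le
    (D := (96 * C + 7) * n ^ (α + 1)⁻¹) (by nlinarith) (by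
      rw [Real.mul_rpow (by positivity) (by positivity), ← Real.rpow_mul (by positivity),
        add_comm 1 α, inv_mul_cancel₀ (by positivity), Real.rpow_one]
      nlinarith)
  calc (G.edgeSet.ncard : ℝ) = #G.edgeFinset := by rw [← Set.ncard_coe_finset, coe_edgeFinset]
    _ ≤ (96 * C + 7) * n ^ (α + 1)⁻¹ * n := hedges
    _ = (96 * C + 7) * n ^ (2 - α / (α + 1)) := by
      rw [mul_assoc, ← Real.rpow_add_one (by positivity)]
      congr 2
      field_simp
      ring
end

section
/- Let f : ℝ → ℝ be a nonnegative nondecreasing function and let G be a finite simple bipartite graph (every edge joins the two sides of a fixed bipartition) with n vertices, average degree d̄ = 2|E(G)|/n ≥ 16, and at least 25·n^{3/2} edges. If every pair of ADJACENT vertices of G has f-sparse sub-bineighborhoods, then d̄³ ≤ 2^{20} · n · f(2·d̄). -/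
open Finset
open scoped Classical

set_option linter.unusedSectionVars false
set_option maxHeartbeats 1000000

namespace Stmt3Aux

noncomputable def χ (P : Prop) : ℕ := if P then 1 else 0

lemma χ_le_one (P : Prop) : χ P ≤ 1 := by unfold χ; split <;> simp
lemma χ_mul_self (P : Prop) : χ P * χ P = χ P := by unfold χ; split <;> simp
lemma χ_true {P : Prop} (h : P) : χ P = 1 := if_pos h
lemma χ_false {P : Prop} (h : ¬ P) : χ P = 0 := if_neg h

variable {V : Type} [Fintype V] (G : SimpleGraph V)

lemma χ_adj_comm (x y : V) : χ (G.Adj x y) = χ (G.Adj y x) := by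
  unfold χ; simp [SimpleGraph.adj_comm]

noncomputable def dg (u : V) : ℕ := ∑ b, χ (G.Adj u b)
noncomputable def Sd (u : V) : ℕ := ∑ v, χ (G.Adj u v) * dg G v
noncomputable def cB (u b : V) : ℕ := ∑ x, χ (G.Adj u x) * χ (G.Adj x b)
noncomputable def P2 (u v : V) : ℕ :=
  ∑ a ∈ univ.erase v, ∑ b ∈ univ.erase u, χ (G.Adj u a) * (χ (G.Adj v b) * χ (G.Adj a b))
noncomputable def eB (U W : Finset V) : ℕ := ∑ a ∈ U, ∑ b ∈ W, χ (G.Adj a b)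

lemma eB_coe (U W : Finset V) : edgesBetween G ↑U ↑W = eB G U W := by
  have h : {p : V × V | p.1 ∈ (↑U : Set V) ∧ p.2 ∈ (↑W : Set V) ∧ G.Adj p.1 p.2}
      = ↑((U ×ˢ W).filter fun p => G.Adj p.1 p.2) := by
    ext ⟨a, b⟩; simp [and_assoc]
  rw [edgesBetween, h, Set.ncard_coe_finset, card_filter, sum_product]
  rfl

lemma dg_eq_degree (v : V) : dg G v = G.degree v := by
  rw [SimpleGraph.degree, SimpleGraph.neighborFinset_eq_filter, card_filter]
  rfl

lemma sum_dg : ∑ v, dg G v = 2 * G.edgeFinset.card := by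
  simp_rw [dg_eq_degree]
  exact SimpleGraph.sum_degrees_eq_twice_card_edges G

lemma sum_Sd : ∑ u, Sd G u = ∑ v, dg G v * dg G v := by
  unfold Sd
  rw [Finset.sum_comm]
  refine Finset.sum_congr rfl fun v _ => ?_
  rw [← Finset.sum_mul]
  congr 1
  unfold dg
  exact Finset.sum_congr rfl fun u _ => χ_adj_comm G v u ▸ rfl

lemma sum_cB (u : V) : ∑ b, cB G u b = Sd G u := by
  unfold cB Sd
  rw [Finset.sum_comm]
  refine Finset.sum_congr rfl fun v _ => ?_
  rw [← Finset.mul_sum]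
  rfl

lemma cB_sq (u : V) :
    ∑ b, cB G u b * cB G u b
      = ∑ v, ∑ a, χ (G.Adj u v) * χ (G.Adj u a) * (∑ b, χ (G.Adj v b) * χ (G.Adj a b)) := by
  unfold cB
  simp_rw [Finset.sum_mul_sum, Finset.mul_sum]
  rw [Finset.sum_comm]
  refine sum_congr rfl fun v _ => ?_
  rw [Finset.sum_comm]
  exact sum_congr rfl fun a _ => sum_congr rfl fun b _ => by ring

lemma key_count (u : V) :
    ∑ b, cB G u b * cB G u b
      ≤ (∑ v, χ (G.Adj u v) * P2 G u v) + Sd G u + dg G u * dg G u := by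
  rw [cB_sq]
  have h2 : ∀ v : V,
      (∑ a, χ (G.Adj u v) * χ (G.Adj u a) * (∑ b, χ (G.Adj v b) * χ (G.Adj a b)))
      = χ (G.Adj u v) * dg G v
        + ∑ a ∈ univ.erase v,
            χ (G.Adj u v) * χ (G.Adj u a) * (∑ b, χ (G.Adj v b) * χ (G.Adj a b)) := by
    intro v
    rw [← Finset.add_sum_erase _ _ (mem_univ v)]
    congr 1
    rw [χ_mul_self]
    unfold dg
    congr 1
    exact sum_congr rfl fun b _ => χ_mul_self _
  simp_rw [h2]
  rw [Finset.sum_add_distrib]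
  have hSd : (∑ v, χ (G.Adj u v) * dg G v) = Sd G u := rfl
  rw [hSd]
  have hoff : ∀ v : V,
      (∑ a ∈ univ.erase v,
        χ (G.Adj u v) * χ (G.Adj u a) * (∑ b, χ (G.Adj v b) * χ (G.Adj a b)))
      ≤ χ (G.Adj u v) * P2 G u v + ∑ a ∈ univ.erase v, χ (G.Adj u v) * χ (G.Adj u a) := by
    intro v
    have hsplit : ∀ a : V, (∑ b, χ (G.Adj v b) * χ (G.Adj a b))
        = χ (G.Adj v u) * χ (G.Adj a u) + ∑ b ∈ univ.erase u, χ (G.Adj v b) * χ (G.Adj a b) :=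
      fun a => (Finset.add_sum_erase _ _ (mem_univ u)).symm
    have hP2 : χ (G.Adj u v) * P2 G u v
        = ∑ a ∈ univ.erase v,
            χ (G.Adj u v) * χ (G.Adj u a) * (∑ b ∈ univ.erase u, χ (G.Adj v b) * χ (G.Adj a b)) := by
      unfold P2
      rw [Finset.mul_sum]
      refine sum_congr rfl fun a _ => ?_
      simp_rw [Finset.mul_sum]
      exact sum_congr rfl fun b _ => by ring
    calc (∑ a ∈ univ.erase v,
            χ (G.Adj u v) * χ (G.Adj u a) * (∑ b, χ (G.Adj v b) * χ (G.Adj a b)))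
        = ∑ a ∈ univ.erase v,
            (χ (G.Adj u v) * χ (G.Adj u a) * (χ (G.Adj v u) * χ (G.Adj a u))
              + χ (G.Adj u v) * χ (G.Adj u a)
                  * (∑ b ∈ univ.erase u, χ (G.Adj v b) * χ (G.Adj a b))) := by
          refine sum_congr rfl fun a _ => ?_
          rw [hsplit a, mul_add]
      _ = (∑ a ∈ univ.erase v,
            χ (G.Adj u v) * χ (G.Adj u a) * (χ (G.Adj v u) * χ (G.Adj a u)))
          + ∑ a ∈ univ.erase v,
              χ (G.Adj u v) * χ (G.Adj u a)
                * (∑ b ∈ univ.erase u, χ (G.Adj v b) * χ (G.Adj a b)) :=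
          Finset.sum_add_distrib
      _ ≤ (∑ a ∈ univ.erase v, χ (G.Adj u v) * χ (G.Adj u a)) + χ (G.Adj u v) * P2 G u v := by
          rw [hP2]
          refine Nat.add_le_add (Finset.sum_le_sum fun a _ => ?_) le_rfl
          have h1 : χ (G.Adj v u) * χ (G.Adj a u) ≤ 1 :=
            le_trans (Nat.mul_le_mul (χ_le_one _) (χ_le_one _)) (by norm_num)
          calc χ (G.Adj u v) * χ (G.Adj u a) * (χ (G.Adj v u) * χ (G.Adj a u))
              ≤ χ (G.Adj u v) * χ (G.Adj u a) * 1 := Nat.mul_le_mul_left _ h1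
            _ = χ (G.Adj u v) * χ (G.Adj u a) := mul_one _
      _ = χ (G.Adj u v) * P2 G u v + ∑ a ∈ univ.erase v, χ (G.Adj u v) * χ (G.Adj u a) :=
          add_comm _ _
  have hdd : (∑ v, ∑ a ∈ univ.erase v, χ (G.Adj u v) * χ (G.Adj u a)) ≤ dg G u * dg G u := by
    have h1 : ∀ v : V, (∑ a ∈ univ.erase v, χ (G.Adj u v) * χ (G.Adj u a))
        ≤ χ (G.Adj u v) * dg G u := by
      intro v
      calc (∑ a ∈ univ.erase v, χ (G.Adj u v) * χ (G.Adj u a))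
          ≤ ∑ a, χ (G.Adj u v) * χ (G.Adj u a) :=
            Finset.sum_le_sum_of_subset (subset_univ _)
        _ = χ (G.Adj u v) * dg G u := by rw [← Finset.mul_sum]; rfl
    calc (∑ v, ∑ a ∈ univ.erase v, χ (G.Adj u v) * χ (G.Adj u a))
        ≤ ∑ v, χ (G.Adj u v) * dg G u := Finset.sum_le_sum fun v _ => h1 v
      _ = dg G u * dg G u := by rw [← Finset.sum_mul]; rfl
  have hsum := Finset.sum_le_sum (fun v (_ : v ∈ (univ : Finset V)) => hoff v)
  rw [Finset.sum_add_distrib] at hsum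
  omega

lemma P2_eq_eB (u v : V) :
    P2 G u v = eB G ((univ.filter (fun a => G.Adj u a)).erase v)
        ((univ.filter (fun b => G.Adj v b)).erase u) := by
  unfold P2 eB
  rw [← Finset.filter_erase, ← Finset.filter_erase, Finset.sum_filter]
  refine sum_congr rfl fun a _ => ?_
  rw [Finset.sum_filter]
  by_cases ha : G.Adj u a
  · rw [χ_true ha]
    refine Eq.trans ?_ (if_pos ha).symm
    refine sum_congr rfl fun b _ => ?_
    by_cases hb : G.Adj v b
    · rw [χ_true hb, one_mul, one_mul, if_pos hb]
    · rw [χ_false hb, zero_mul, mul_zero, if_neg hb]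
  · rw [χ_false ha]
    simp [ha]

lemma top_sel {α : Type*} [DecidableEq α] (w : α → ℕ) (A : Finset α) :
    ∀ k ≤ A.card, ∃ U : Finset α, U ⊆ A ∧ U.card = k ∧
      k * (∑ a ∈ A, w a) ≤ A.card * (∑ a ∈ U, w a) := by
  induction A using Finset.strongInduction with
  | _ A ih =>
    intro k hk
    rcases eq_or_lt_of_le hk with heq | hlt
    · exact ⟨A, Finset.Subset.refl A, heq.symm, le_of_eq (by rw [heq])⟩
    by_cases hk0 : k = 0
    · exact ⟨∅, Finset.empty_subset A, by simp [hk0], by simp [hk0]⟩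
    obtain ⟨a, haA, hamin⟩ :=
      Finset.exists_min_image A w (Finset.card_pos.mp (lt_of_le_of_lt (Nat.zero_le k) hlt))
    have hsub : A.erase a ⊂ A := Finset.erase_ssubset haA
    have hcard : (A.erase a).card = A.card - 1 := Finset.card_erase_of_mem haA
    have hk' : k ≤ (A.erase a).card := by omega
    obtain ⟨U, hUsub, hUcard, hUsum⟩ := ih _ hsub k hk'
    refine ⟨U, hUsub.trans (Finset.erase_subset a A), hUcard, ?_⟩
    set e := (A.erase a).card with he
    have hce : A.card = e + 1 := by omega
    have hmin : A.card * w a ≤ ∑ x ∈ A, w x := by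
      calc A.card * w a = ∑ _x ∈ A, w a := by rw [Finset.sum_const, smul_eq_mul]
        _ ≤ ∑ x ∈ A, w x := Finset.sum_le_sum fun x hx => hamin x hx
    have hsplit : ∑ x ∈ A, w x = w a + ∑ x ∈ A.erase a, w x :=
      (Finset.add_sum_erase _ _ haA).symm
    have key : e * (∑ x ∈ A, w x) ≤ A.card * ∑ x ∈ A.erase a, w x := by
      rw [hce] at hmin ⊢
      nlinarith [hmin, hsplit]
    have h4 : e * (k * (∑ x ∈ A, w x)) ≤ e * (A.card * (∑ x ∈ U, w x)) := by
      calc e * (k * (∑ x ∈ A, w x)) = k * (e * (∑ x ∈ A, w x)) := by ring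
        _ ≤ k * (A.card * ∑ x ∈ A.erase a, w x) := Nat.mul_le_mul_left _ key
        _ = A.card * (k * ∑ x ∈ A.erase a, w x) := by ring
        _ ≤ A.card * (e * (∑ x ∈ U, w x)) := Nat.mul_le_mul_left _ hUsum
        _ = e * (A.card * (∑ x ∈ U, w x)) := by ring
    have hepos : 0 < e := by omega
    exact Nat.le_of_mul_le_mul_left h4 hepos

end Stmt3Aux

namespace Stmt3Aux

variable {V : Type} [Fintype V]

lemma csSd (G : SimpleGraph V) (n : ℕ) (hcard : (((univ : Finset V)).card : ℝ) = n) (u : V) :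
    (Sd G u : ℝ) * (Sd G u : ℝ)
      ≤ (n:ℝ) * (((∑ w, (χ (G.Adj u w) * P2 G u w : ℕ)) : ℝ)
          + (Sd G u : ℝ) + (dg G u : ℝ) * (dg G u : ℝ)) := by
  have hscB : (∑ b, (cB G u b : ℝ)) = (Sd G u : ℝ) := by
    exact_mod_cast congrArg (Nat.cast : ℕ → ℝ) (sum_cB G u)
  have hcs := sq_sum_le_card_mul_sum_sq (s := (univ : Finset V))
    (f := fun b => (cB G u b : ℝ))
  rw [hscB, hcard] at hcs
  have hkc : (∑ b, (cB G u b : ℝ) ^ 2)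
      ≤ ((∑ w, (χ (G.Adj u w) * P2 G u w : ℕ)) : ℝ)
        + (Sd G u : ℝ) + (dg G u : ℝ) * (dg G u : ℝ) := by
    have hc : ((∑ b, cB G u b * cB G u b : ℕ) : ℝ)
        ≤ ((((∑ w, χ (G.Adj u w) * P2 G u w) + Sd G u + dg G u * dg G u : ℕ)) : ℝ) := by
      exact_mod_cast key_count G u
    push_cast at hc
    simp only [sq]
    push_cast
    linarith [hc]
  have hs2 := le_trans hcs (mul_le_mul_of_nonneg_left hkc (by positivity))
  nlinarith [hs2]

lemma choose_u (G : SimpleGraph V) (n : ℕ) (d : ℝ)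
    (hcard : (((univ : Finset V)).card : ℝ) = n)
    (hsumdg : (∑ w, (dg G w : ℝ)) = n * d)
    (hd16 : 16 ≤ d) (hN1 : (1:ℝ) ≤ n) :
    ∃ u : V, d * (dg G u : ℝ) ≤ 4 * (Sd G u : ℝ) ∧ d * d / 2 ≤ (Sd G u : ℝ) := by
  have hd0 : (0:ℝ) < d := lt_of_lt_of_le (by norm_num) hd16
  have hn0' : (0:ℝ) < n := lt_of_lt_of_le (by norm_num) hN1
  have hT2 : (n:ℝ) * (d*d) ≤ ∑ w, (dg G w : ℝ) * (dg G w : ℝ) := by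
    have hcs := sq_sum_le_card_mul_sum_sq (s := (univ : Finset V))
      (f := fun w => (dg G w : ℝ))
    rw [hsumdg, hcard] at hcs
    simp only [sq] at hcs
    nlinarith [hcs, hn0']
  have hTS : (∑ w, (Sd G w : ℝ)) = ∑ w, (dg G w : ℝ) * (dg G w : ℝ) := by
    exact_mod_cast congrArg (Nat.cast : ℕ → ℝ) (sum_Sd G)
  set p : V → Prop := fun w => d * (dg G w : ℝ) ≤ 4 * (Sd G w : ℝ) with hp
  have hsplit := Finset.sum_filter_add_sum_filter_not (univ : Finset V) p
    (fun w => (Sd G w : ℝ))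
  have hcompl : (∑ w ∈ univ.filter (fun w => ¬ p w), (Sd G w : ℝ))
      ≤ (n:ℝ) * (d*d) / 4 := by
    calc (∑ w ∈ univ.filter (fun w => ¬ p w), (Sd G w : ℝ))
        ≤ ∑ w ∈ univ.filter (fun w => ¬ p w), d/4 * (dg G w : ℝ) := by
          refine Finset.sum_le_sum fun w hw => ?_
          have := (Finset.mem_filter.mp hw).2
          rw [hp] at this
          push_neg at this
          linarith
      _ ≤ ∑ w, d/4 * (dg G w : ℝ) := by
          refine Finset.sum_le_sum_of_subset_of_nonneg (Finset.filter_subset _ _)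
            fun w _ _ => by positivity
      _ = d/4 * ((n:ℝ) * d) := by rw [← Finset.mul_sum, hsumdg]
      _ = (n:ℝ) * (d*d) / 4 := by ring
  have hAf : (3/4) * ((n:ℝ)*(d*d)) ≤ ∑ w ∈ univ.filter p, (Sd G w : ℝ) := by
    have := hsplit
    linarith [hT2, hTS.symm ▸ hT2]
  by_contra hno
  push_neg at hno
  have hb : ∀ w ∈ univ.filter p, (Sd G w : ℝ) ≤ d*d/2 := by
    intro w hw
    have hpw := (Finset.mem_filter.mp hw).2
    exact le_of_lt (hno w hpw)
  have hcardf : ((univ.filter p).card : ℝ) ≤ n := by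
    rw [← hcard]
    exact_mod_cast Finset.card_filter_le _ _
  have hsumb : (∑ w ∈ univ.filter p, (Sd G w : ℝ))
      ≤ ((univ.filter p).card : ℝ) * (d*d/2) := by
    have := Finset.sum_le_card_nsmul (univ.filter p) (fun w => (Sd G w : ℝ)) (d*d/2) hb
    rwa [nsmul_eq_mul] at this
  have : (∑ w ∈ univ.filter p, (Sd G w : ℝ)) ≤ (n:ℝ) * (d*d/2) :=
    le_trans hsumb (mul_le_mul_of_nonneg_right hcardf (by positivity))
  nlinarith [hAf, hn0', hd0]

lemma qbound (G : SimpleGraph V) (n : ℕ) (d : ℝ) (u : V)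
    (hcon : ∀ w, G.Adj u w →
      120 * (n:ℝ) * (P2 G u w : ℝ) < d * ((d + (dg G u : ℝ)) * (d + (dg G w : ℝ)))) :
    120 * (n:ℝ) * ((∑ w, (χ (G.Adj u w) * P2 G u w : ℕ)) : ℝ)
      ≤ d * (d + (dg G u : ℝ)) * (d * (dg G u : ℝ) + (Sd G u : ℝ)) := by
  have hperv : ∀ w : V, 120 * (n:ℝ) * ((χ (G.Adj u w) * P2 G u w : ℕ) : ℝ)
      ≤ (χ (G.Adj u w) : ℝ) * (d * ((d + (dg G u : ℝ)) * (d + (dg G w : ℝ)))) := by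
    intro w
    by_cases h : G.Adj u w
    · rw [χ_true h]
      push_cast
      have := le_of_lt (hcon w h)
      nlinarith [this]
    · rw [χ_false h]
      simp
  have hsum := Finset.sum_le_sum fun w (_ : w ∈ (univ : Finset V)) => hperv w
  have hL : (∑ w, 120 * (n:ℝ) * ((χ (G.Adj u w) * P2 G u w : ℕ) : ℝ))
      = 120 * (n:ℝ) * ((∑ w, (χ (G.Adj u w) * P2 G u w : ℕ)) : ℝ) := by
    push_cast [Finset.mul_sum]
    rfl
  have hR : (∑ w, (χ (G.Adj u w) : ℝ) * (d * ((d + (dg G u : ℝ)) * (d + (dg G w : ℝ)))))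
      = d * (d + (dg G u : ℝ)) * (d * (dg G u : ℝ) + (Sd G u : ℝ)) := by
    have e1 : (∑ w, (χ (G.Adj u w) : ℝ) * (d * ((d + (dg G u : ℝ)) * (d + (dg G w : ℝ)))))
        = d * (d + (dg G u : ℝ)) * (∑ w, (χ (G.Adj u w) : ℝ) * (d + (dg G w : ℝ))) := by
      rw [Finset.mul_sum]
      exact Finset.sum_congr rfl fun w _ => by ring
    have e3 : (∑ w, (χ (G.Adj u w) : ℝ) * (d + (dg G w : ℝ)))
        = (∑ w, ((χ (G.Adj u w) : ℝ) * d + (χ (G.Adj u w) : ℝ) * (dg G w : ℝ))) :=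
      Finset.sum_congr rfl fun w _ => by ring
    have e4 : (∑ w, (χ (G.Adj u w) : ℝ)) = (dg G u : ℝ) := by
      unfold dg
      push_cast
      rfl
    have e5 : (∑ w, (χ (G.Adj u w) : ℝ) * (dg G w : ℝ)) = (Sd G u : ℝ) := by
      unfold Sd
      push_cast
      rfl
    rw [e1, e3, Finset.sum_add_distrib, ← Finset.sum_mul, e4, e5]
    ring
  rw [hL, hR] at hsum
  exact hsum

lemma exists_good_edge (G : SimpleGraph V) (n : ℕ) (d : ℝ)
    (hcard : (((univ : Finset V)).card : ℝ) = n)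
    (hsumdg : (∑ w, (dg G w : ℝ)) = n * d)
    (hd16 : 16 ≤ d) (hd2 : 2500 * (n:ℝ) ≤ d * d) (hN1 : (1:ℝ) ≤ n) :
    ∃ u v : V, G.Adj u v ∧
      d * ((d + (dg G u : ℝ)) * (d + (dg G v : ℝ))) ≤ 120 * (n:ℝ) * (P2 G u v : ℝ) := by
  have hd0 : (0:ℝ) < d := lt_of_lt_of_le (by norm_num) hd16
  by_contra hcon
  push_neg at hcon
  obtain ⟨u, hu1, hu2⟩ := choose_u G n d hcard hsumdg hd16 hN1
  have hCS := csSd G n hcard u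
  have hQb := qbound G n d u (fun w hw => hcon u w hw)
  set S : ℝ := (Sd G u : ℝ) with hS
  set δ : ℝ := (dg G u : ℝ) with hδ
  set Q : ℝ := ((∑ w, (χ (G.Adj u w) * P2 G u w : ℕ)) : ℝ) with hQdef
  have hQ0 : 0 ≤ Q := by rw [hQdef]; positivity
  have hS0 : (0:ℝ) ≤ S := by rw [hS]; positivity
  have hδ0 : (0:ℝ) ≤ δ := by rw [hδ]; positivity
  clear_value S δ Q
  have e1 : d * (d + δ) ≤ 6 * S := by nlinarith [hd2, hu1, hu2, hN1]
  have e2 : d * δ + S ≤ 5 * S := by linarith [hu1, hd0]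
  have h1 : d * (d + δ) * (d * δ + S) ≤ 30 * (S * S) := by
    have hnn : (0:ℝ) ≤ d * δ + S := by positivity
    have h6 : (0:ℝ) ≤ 6 * S := by linarith
    have := mul_le_mul e1 e2 hnn h6
    nlinarith [this]
  have h3 : 120 * ((n:ℝ) * S) ≤ S * S := by
    have q3 : 2500 * (n:ℝ) * S ≤ (d * d) * S := mul_le_mul_of_nonneg_right hd2 hS0
    nlinarith [q3, hu2, hS0]
  have h2 : 120 * ((n:ℝ) * (δ * δ)) ≤ S * S := by
    have q1 : (d*δ) * (d*δ) ≤ (4*S) * (4*S) :=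
      mul_self_le_mul_self (by positivity) hu1
    have q2 : 2500 * (n:ℝ) * (δ*δ) ≤ (d*d) * (δ*δ) :=
      mul_le_mul_of_nonneg_right hd2 (by positivity)
    nlinarith [q1, q2, hS0]
  have hexp : (n:ℝ)*(Q + S + δ*δ) = (n:ℝ)*Q + (n:ℝ)*S + (n:ℝ)*(δ*δ) := by ring
  have hCS' : S * S ≤ (n:ℝ)*Q + (n:ℝ)*S + (n:ℝ)*(δ*δ) := hCS.trans_eq hexp
  have hSpos : 0 < S := by nlinarith [hu2, hd16]
  have hSS : 0 < S * S := mul_pos hSpos hSpos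
  linarith only [hQb, h1, h2, h3, hCS', hSS]

end Stmt3Aux

namespace Stmt3Aux
variable {V : Type} [Fintype V]

lemma conclude (G : SimpleGraph V) (f : ℝ → ℝ) (hf0 : ∀ x, 0 ≤ f x) (hfmono : Monotone f)
    (s : Set V) (hbip : ∀ u v : V, G.Adj u v → (u ∈ s ↔ v ∉ s))
    (n : ℕ) (d : ℝ) (hd16 : 16 ≤ d) (hn0' : (0:ℝ) < n)
    (hsparse : ∀ u v : V, G.Adj u v → ∀ U W : Set V,
        U ⊆ G.neighborSet u \ {v} → W ⊆ G.neighborSet v \ {u} → Disjoint U W →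
        (edgesBetween G U W : ℝ) ≤ f ((U.ncard + W.ncard : ℕ) : ℝ))
    (u v : V) (huv : G.Adj u v)
    (hP : d * ((d + (dg G u : ℝ)) * (d + (dg G v : ℝ))) ≤ 120 * (n:ℝ) * (P2 G u v : ℝ)) :
    d ^ 3 ≤ 2 ^ 20 * n * f (2 * d) := by
  have hd0 : (0:ℝ) < d := lt_of_lt_of_le (by norm_num) hd16
  set A : Finset V := (univ.filter (fun a => G.Adj u a)).erase v with hA
  set B : Finset V := (univ.filter (fun b => G.Adj v b)).erase u with hB
  have hPeB : P2 G u v = eB G A B := P2_eq_eB G u v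
  have hδu0 : (0:ℝ) ≤ (dg G u : ℝ) := by positivity
  have hδv0 : (0:ℝ) ≤ (dg G v : ℝ) := by positivity
  have hposP : (0:ℝ) < (P2 G u v : ℝ) := by
    by_contra hle
    push_neg at hle
    have h0 : (P2 G u v : ℝ) = 0 := le_antisymm hle (by positivity)
    rw [h0] at hP
    have hp1 : (0:ℝ) < d + (dg G u:ℝ) := by linarith
    have hp2 : (0:ℝ) < d + (dg G v:ℝ) := by linarith
    nlinarith [hP, mul_pos hd0 (mul_pos hp1 hp2)]
  have hP2pos : 0 < P2 G u v := by exact_mod_cast hposP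
  have hApos : 0 < A.card := by
    rcases Finset.eq_empty_or_nonempty A with h | h
    · exfalso
      rw [hPeB, h] at hP2pos
      simp [eB] at hP2pos
    · exact card_pos.mpr h
  have hBpos : 0 < B.card := by
    rcases Finset.eq_empty_or_nonempty B with h | h
    · exfalso
      rw [hPeB, h] at hP2pos
      simp [eB] at hP2pos
    · exact card_pos.mpr h
  set k1 : ℕ := min (Nat.floor d) A.card with hk1
  set k2 : ℕ := min (Nat.floor d) B.card with hk2
  obtain ⟨U, hUA, hUcard, hUineq⟩ :=
    top_sel (fun a => ∑ b ∈ B, χ (G.Adj a b)) A k1 (min_le_right _ _)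
  obtain ⟨W, hWB, hWcard, hWineq⟩ :=
    top_sel (fun b => ∑ a ∈ U, χ (G.Adj a b)) B k2 (min_le_right _ _)
  have hUeq : (∑ a ∈ A, ∑ b ∈ B, χ (G.Adj a b)) = eB G A B := rfl
  have hUeq2 : (∑ a ∈ U, ∑ b ∈ B, χ (G.Adj a b)) = eB G U B := rfl
  have hWeq : (∑ b ∈ B, ∑ a ∈ U, χ (G.Adj a b)) = eB G U B := Finset.sum_comm
  have hWeq2 : (∑ b ∈ W, ∑ a ∈ U, χ (G.Adj a b)) = eB G U W := Finset.sum_comm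
  rw [hUeq, hUeq2] at hUineq
  rw [hWeq, hWeq2] at hWineq
  -- natural number chain
  have hchain : k1 * k2 * eB G A B ≤ A.card * B.card * eB G U W := by
    calc k1 * k2 * eB G A B = k2 * (k1 * eB G A B) := by ring
      _ ≤ k2 * (A.card * eB G U B) := Nat.mul_le_mul_left _ hUineq
      _ = A.card * (k2 * eB G U B) := by ring
      _ ≤ A.card * (B.card * eB G U W) := Nat.mul_le_mul_left _ hWineq
      _ = A.card * B.card * eB G U W := by ring
  -- cards of A and B
  have hfcardA : (univ.filter (fun a => G.Adj u a)).card = dg G u := by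
    rw [card_filter]; rfl
  have hfcardB : (univ.filter (fun b => G.Adj v b)).card = dg G v := by
    rw [card_filter]; rfl
  have hvmem : v ∈ univ.filter (fun a => G.Adj u a) := by
    simp [huv]
  have humem : u ∈ univ.filter (fun b => G.Adj v b) := by
    simp [huv.symm]
  have hAcard : A.card = dg G u - 1 := by
    rw [hA, Finset.card_erase_of_mem hvmem, hfcardA]
  have hBcard : B.card = dg G v - 1 := by
    rw [hB, Finset.card_erase_of_mem humem, hfcardB]
  have hdgu1 : 1 ≤ dg G u := by
    rw [← hfcardA]
    exact Finset.card_pos.mpr ⟨v, hvmem⟩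
  have hdgv1 : 1 ≤ dg G v := by
    rw [← hfcardB]
    exact Finset.card_pos.mpr ⟨u, humem⟩
  have hAreal : (A.card : ℝ) = (dg G u : ℝ) - 1 := by
    rw [hAcard]
    push_cast [hdgu1]
    ring
  have hBreal : (B.card : ℝ) = (dg G v : ℝ) - 1 := by
    rw [hBcard]
    push_cast [hdgv1]
    ring
  -- ratio inequalities
  have hfloor1 : d - 1 ≤ (Nat.floor d : ℝ) := le_of_lt (Nat.sub_one_lt_floor d)
  have hfloor2 : (Nat.floor d : ℝ) ≤ d := Nat.floor_le (le_of_lt hd0)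
  have r3 : (d - 1) * (A.card : ℝ) ≤ (k1 : ℝ) * (d + (dg G u : ℝ)) := by
    rcases le_or_gt (Nat.floor d) A.card with h | h
    · have hk : k1 = Nat.floor d := min_eq_left h
      rw [hk]
      nlinarith [hfloor1, hAreal, hδu0, hd16]
    · have hk : k1 = A.card := min_eq_right (le_of_lt h)
      rw [hk]
      have : (0:ℝ) ≤ (A.card : ℝ) := by positivity
      nlinarith [hδu0, this]
  have r4 : (d - 1) * (B.card : ℝ) ≤ (k2 : ℝ) * (d + (dg G v : ℝ)) := by
    rcases le_or_gt (Nat.floor d) B.card with h | h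
    · have hk : k2 = Nat.floor d := min_eq_left h
      rw [hk]
      nlinarith [hfloor1, hBreal, hδv0, hd16]
    · have hk : k2 = B.card := min_eq_right (le_of_lt h)
      rw [hk]
      have : (0:ℝ) ≤ (B.card : ℝ) := by positivity
      nlinarith [hδv0, this]
  -- apply the sparseness hypothesis
  have hUsub : (↑U : Set V) ⊆ G.neighborSet u \ {v} := by
    intro x hx
    have hxA : x ∈ A := hUA hx
    rw [hA] at hxA
    obtain ⟨hne, hmem⟩ := Finset.mem_erase.mp hxA
    have hadj := (Finset.mem_filter.mp hmem).2
    exact ⟨hadj, hne⟩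
  have hWsub : (↑W : Set V) ⊆ G.neighborSet v \ {u} := by
    intro x hx
    have hxB : x ∈ B := hWB hx
    rw [hB] at hxB
    obtain ⟨hne, hmem⟩ := Finset.mem_erase.mp hxB
    have hadj := (Finset.mem_filter.mp hmem).2
    exact ⟨hadj, hne⟩
  have hdisj : Disjoint (↑U : Set V) (↑W : Set V) := by
    rw [Set.disjoint_left]
    intro x hxU hxW
    have h1 : G.Adj u x := (hUsub hxU).1
    have h2 : G.Adj v x := (hWsub hxW).1
    have b1 := hbip u v huv
    have b2 := hbip u x h1
    have b3 := hbip v x h2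
    tauto
  have happ := hsparse u v huv ↑U ↑W hUsub hWsub hdisj
  rw [eB_coe, Set.ncard_coe_finset, Set.ncard_coe_finset] at happ
  have h2d : ((U.card + W.card : ℕ) : ℝ) ≤ 2 * d := by
    push_cast
    have h1 : (U.card : ℝ) ≤ (Nat.floor d : ℝ) := by
      have hh : U.card ≤ Nat.floor d := by
        rw [hUcard, hk1]
        exact min_le_left _ _
      exact_mod_cast hh
    have h2 : (W.card : ℝ) ≤ (Nat.floor d : ℝ) := by
      have hh : W.card ≤ Nat.floor d := by
        rw [hWcard, hk2]
        exact min_le_left _ _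
      exact_mod_cast hh
    linarith [hfloor2]
  have r5 : (eB G U W : ℝ) ≤ f (2 * d) :=
    le_trans happ (hfmono h2d)
  -- real chain
  have hcA0 : (0:ℝ) < (A.card : ℝ) := by exact_mod_cast hApos
  have hcB0 : (0:ℝ) < (B.card : ℝ) := by exact_mod_cast hBpos
  have hE00 : (0:ℝ) ≤ (eB G A B : ℝ) := by positivity
  have hE20 : (0:ℝ) ≤ (eB G U W : ℝ) := by positivity
  have hk10 : (0:ℝ) ≤ (k1 : ℝ) := by positivity
  have hk20 : (0:ℝ) ≤ (k2 : ℝ) := by positivity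
  have hchainR : (k1:ℝ) * (k2:ℝ) * (eB G A B : ℝ)
      ≤ (A.card : ℝ) * (B.card : ℝ) * (eB G U W : ℝ) := by
    exact_mod_cast hchain
  rw [hPeB] at hP
  have c1 : ((d-1) * (A.card:ℝ)) * ((d-1) * (B.card:ℝ))
      ≤ ((k1:ℝ) * (d + (dg G u:ℝ))) * ((k2:ℝ) * (d + (dg G v:ℝ))) := by
    refine mul_le_mul r3 r4 ?_ ?_
    · have : (0:ℝ) ≤ d - 1 := by linarith
      positivity
    · positivity
  have c2 : d * (((d-1) * (A.card:ℝ)) * ((d-1) * (B.card:ℝ)))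
      ≤ d * (((k1:ℝ) * (d + (dg G u:ℝ))) * ((k2:ℝ) * (d + (dg G v:ℝ)))) :=
    mul_le_mul_of_nonneg_left c1 (le_of_lt hd0)
  have c3 : d * (((k1:ℝ) * (d + (dg G u:ℝ))) * ((k2:ℝ) * (d + (dg G v:ℝ))))
      = ((k1:ℝ) * (k2:ℝ)) * (d * ((d + (dg G u:ℝ)) * (d + (dg G v:ℝ)))) := by ring
  have c4 : ((k1:ℝ) * (k2:ℝ)) * (d * ((d + (dg G u:ℝ)) * (d + (dg G v:ℝ))))
      ≤ ((k1:ℝ) * (k2:ℝ)) * (120 * (n:ℝ) * (eB G A B : ℝ)) :=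
    mul_le_mul_of_nonneg_left hP (by positivity)
  have c5 : ((k1:ℝ) * (k2:ℝ)) * (120 * (n:ℝ) * (eB G A B : ℝ))
      = 120 * (n:ℝ) * ((k1:ℝ) * (k2:ℝ) * (eB G A B : ℝ)) := by ring
  have c6 : 120 * (n:ℝ) * ((k1:ℝ) * (k2:ℝ) * (eB G A B : ℝ))
      ≤ 120 * (n:ℝ) * ((A.card : ℝ) * (B.card : ℝ) * (eB G U W : ℝ)) :=
    mul_le_mul_of_nonneg_left hchainR (by positivity)
  have c7 : 120 * (n:ℝ) * ((A.card : ℝ) * (B.card : ℝ) * (eB G U W : ℝ))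
      ≤ 120 * (n:ℝ) * ((A.card : ℝ) * (B.card : ℝ) * f (2*d)) := by
    refine mul_le_mul_of_nonneg_left ?_ (by positivity)
    exact mul_le_mul_of_nonneg_left r5 (by positivity)
  have cbig : (d * ((d-1) * (d-1))) * ((A.card:ℝ) * (B.card:ℝ))
      ≤ (120 * (n:ℝ) * f (2*d)) * ((A.card:ℝ) * (B.card:ℝ)) := by
    have lhs_eq : (d * ((d-1) * (d-1))) * ((A.card:ℝ) * (B.card:ℝ))
        = d * (((d-1) * (A.card:ℝ)) * ((d-1) * (B.card:ℝ))) := by ring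
    have rhs_eq : 120 * (n:ℝ) * ((A.card : ℝ) * (B.card : ℝ) * f (2*d))
        = (120 * (n:ℝ) * f (2*d)) * ((A.card:ℝ) * (B.card:ℝ)) := by ring
    calc (d * ((d-1) * (d-1))) * ((A.card:ℝ) * (B.card:ℝ))
        = d * (((d-1) * (A.card:ℝ)) * ((d-1) * (B.card:ℝ))) := lhs_eq
      _ ≤ d * (((k1:ℝ) * (d + (dg G u:ℝ))) * ((k2:ℝ) * (d + (dg G v:ℝ)))) := c2
      _ = ((k1:ℝ) * (k2:ℝ)) * (d * ((d + (dg G u:ℝ)) * (d + (dg G v:ℝ)))) := c3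
      _ ≤ ((k1:ℝ) * (k2:ℝ)) * (120 * (n:ℝ) * (eB G A B : ℝ)) := c4
      _ = 120 * (n:ℝ) * ((k1:ℝ) * (k2:ℝ) * (eB G A B : ℝ)) := c5
      _ ≤ 120 * (n:ℝ) * ((A.card : ℝ) * (B.card : ℝ) * (eB G U W : ℝ)) := c6
      _ ≤ 120 * (n:ℝ) * ((A.card : ℝ) * (B.card : ℝ) * f (2*d)) := c7
      _ = (120 * (n:ℝ) * f (2*d)) * ((A.card:ℝ) * (B.card:ℝ)) := rhs_eq
  have final1 : d * ((d-1) * (d-1)) ≤ 120 * (n:ℝ) * f (2*d) :=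
    le_of_mul_le_mul_right cbig (mul_pos hcA0 hcB0)
  -- conclude
  have hq : (15*d) * (15*d) ≤ (16*(d-1)) * (16*(d-1)) := by
    refine mul_self_le_mul_self (by linarith) (by linarith)
  have hq2 : d * ((15*d) * (15*d)) ≤ d * ((16*(d-1)) * (16*(d-1))) :=
    mul_le_mul_of_nonneg_left hq (le_of_lt hd0)
  have hnf0 : (0:ℝ) ≤ (n:ℝ) * f (2*d) := by
    have := hf0 (2*d)
    positivity
  nlinarith [final1, hq2, hnf0]

end Stmt3Aux

open Stmt3Aux in
theorem stmt3 (f : ℝ → ℝ) (hf0 : ∀ x, 0 ≤ f x) (hfmono : Monotone f)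
    (V : Type) [Fintype V] (G : SimpleGraph V)
    (s : Set V) (hbip : ∀ u v : V, G.Adj u v → (u ∈ s ↔ v ∉ s))
    (n : ℕ) (hn : n = Fintype.card V)
    (d : ℝ) (hd : d = 2 * G.edgeSet.ncard / n)
    (hd16 : 16 ≤ d)
    (hE : 25 * (n : ℝ) ^ ((3 : ℝ) / 2) ≤ G.edgeSet.ncard)
    (hsparse : ∀ u v : V, G.Adj u v → ∀ U W : Set V,
        U ⊆ G.neighborSet u \ {v} → W ⊆ G.neighborSet v \ {u} → Disjoint U W →
        (edgesBetween G U W : ℝ) ≤ f ((U.ncard + W.ncard : ℕ) : ℝ)) :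
    d ^ 3 ≤ 2 ^ 20 * n * f (2 * d) := by
  classical
  have hd0 : (0:ℝ) < d := lt_of_lt_of_le (by norm_num) hd16
  have hn0 : 0 < n := by
    rcases Nat.eq_zero_or_pos n with h | h
    · exfalso
      rw [h] at hd
      norm_num at hd
      rw [hd] at hd16
      norm_num at hd16
    · exact h
  have hn0' : (0:ℝ) < n := by exact_mod_cast hn0
  have hN1 : (1:ℝ) ≤ n := by exact_mod_cast hn0
  have hms : G.edgeSet.ncard = G.edgeFinset.card := by
    rw [← SimpleGraph.coe_edgeFinset, Set.ncard_coe_finset]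
  rw [hms] at hd hE
  have hNd : (n:ℝ) * d = 2 * G.edgeFinset.card := by
    rw [hd]; field_simp
  have hcard : (((univ : Finset V)).card : ℝ) = n := by rw [card_univ, ← hn]
  have hsumdg : (∑ w, (dg G w : ℝ)) = n * d := by
    rw [hNd]
    exact_mod_cast congrArg (Nat.cast : ℕ → ℝ) (sum_dg G)
  have hd2 : 2500 * (n:ℝ) ≤ d * d := by
    have h32 : (n:ℝ) ^ ((3:ℝ)/2) = n * Real.sqrt n := by
      have h1 : ((3:ℝ)/2) = 1 + 1/2 := by norm_num
      rw [h1, Real.rpow_add hn0', Real.rpow_one, Real.sqrt_eq_rpow]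
    rw [h32] at hE
    have hsq : Real.sqrt n * Real.sqrt n = n := Real.mul_self_sqrt (le_of_lt hn0')
    have hd50 : 50 * Real.sqrt n ≤ d := by
      have h2 : (n:ℝ) * (50 * Real.sqrt n) ≤ n * d := by
        rw [hNd]; nlinarith [hE]
      exact le_of_mul_le_mul_left h2 hn0'
    nlinarith [hd50, Real.sqrt_nonneg (n:ℝ), hsq]
  obtain ⟨u, v, huv, hP⟩ := exists_good_edge G n d hcard hsumdg hd16 hd2 hN1
  exact conclude G f hf0 hfmono s hbip n d hd16 hn0' hsparse u v huv hP
end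

section
/- Let f_1, …, f_n : ℝ → ℝ (n ≥ 1) be pairwise distinct continuous functions such that every two of them have exactly one common point and no three of them share a common point. Then the number of tangent pairs, i.e., unordered pairs {i, j} with i ≠ j such that f_i and f_j are tangent, is at most n − 1. -/
/-- Two bi-infinite `x`-monotone curves (graphs of continuous functions `ℝ → ℝ`) are
tangent (touching) if they have exactly one common point and their difference does not
change sign. -/
def Tangent (f g : ℝ → ℝ) : Prop :=
  (∃! x, f x = g x) ∧ ((∀ x, f x ≤ g x) ∨ (∀ x, g x ≤ f x))

namespace Stmt5Aux

variable {n : ℕ} {f : Fin n → ℝ → ℝ}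

/-- `i` lies (weakly) below `j` everywhere, and they are distinct indices. -/
def B (f : Fin n → ℝ → ℝ) (i j : Fin n) : Prop := i ≠ j ∧ ∀ x, f i x ≤ f j x

lemma tangent_symm {g h : ℝ → ℝ} (t : Tangent g h) : Tangent h g := by
  obtain ⟨⟨x, hx, hu⟩, hc⟩ := t
  exact ⟨⟨x, hx.symm, fun y hy => hu y hy.symm⟩, hc.symm⟩

lemma uniq (hone : ∀ i j : Fin n, i ≠ j → ∃! x, f i x = f j x)
    {i j : Fin n} (hij : i ≠ j) {u v : ℝ} (hu : f i u = f j u) (hv : f i v = f j v) :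
    u = v := by
  obtain ⟨x, -, hx⟩ := hone i j hij
  rw [hx u hu, hx v hv]

lemma cross (hcont : ∀ i, Continuous (f i)) {i j : Fin n}
    {u v : ℝ} (hu : f j u < f i u) (hv : f i v < f j v) :
    ∃ p, f i p = f j p ∧ ((u < p ∧ p < v) ∨ (v < p ∧ p < u)) := by
  have hgc : ContinuousOn (fun x => f i x - f j x) (Set.uIcc u v) :=
    ((hcont i).sub (hcont j)).continuousOn
  have h0 : (0:ℝ) ∈ Set.uIcc (f i u - f j u) (f i v - f j v) := by
    rw [Set.mem_uIcc]; right; constructor <;> linarith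
  have h0' : (0:ℝ) ∈ (fun x => f i x - f j x) '' Set.uIcc u v := by
    apply intermediate_value_uIcc hgc
    simpa using h0
  obtain ⟨p, hp, hp0⟩ := h0'
  have hpe : f i p = f j p := by simpa [sub_eq_zero] using hp0
  have hpu : p ≠ u := by
    intro h; rw [h] at hpe; exact absurd hpe (ne_of_gt hu)
  have hpv : p ≠ v := by
    intro h; rw [h] at hpe; exact absurd hpe (ne_of_lt hv)
  refine ⟨p, hpe, ?_⟩
  rcases Set.mem_uIcc.mp hp with ⟨h1, h2⟩ | ⟨h1, h2⟩
  · exact Or.inl ⟨h1.lt_of_ne (Ne.symm hpu), h2.lt_of_ne hpv⟩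
  · exact Or.inr ⟨h1.lt_of_ne (Ne.symm hpv), h2.lt_of_ne hpu⟩

lemma no3 (hone : ∀ i j : Fin n, i ≠ j → ∃! x, f i x = f j x)
    (hno3 : ¬ ∃ (x : ℝ) (i j k : Fin n), i ≠ j ∧ j ≠ k ∧ i ≠ k ∧
      f i x = f j x ∧ f j x = f k x)
    {i j k : Fin n} (h1 : B f i j) (h2 : B f j k) (hik : i ≠ k) : False := by
  obtain ⟨z, hz⟩ := (hone i k hik).exists
  have e1 : f i z = f j z := le_antisymm (h1.2 z) (by have := h2.2 z; linarith [hz])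
  have e2 : f j z = f k z := le_antisymm (h2.2 z) (by have := h1.2 z; linarith [hz])
  exact hno3 ⟨z, i, j, k, h1.1, h2.1, hik, e1, e2⟩

lemma asymB (hone : ∀ i j : Fin n, i ≠ j → ∃! x, f i x = f j x)
    {i j : Fin n} (h1 : B f i j) (h2 : B f j i) : False := by
  have e0 : f i 0 = f j 0 := le_antisymm (h1.2 0) (h2.2 0)
  have e1 : f i 1 = f j 1 := le_antisymm (h1.2 1) (h2.2 1)
  exact zero_ne_one (uniq hone h1.1 e0 e1)

lemma c4 (hcont : ∀ i, Continuous (f i))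
    (hone : ∀ i j : Fin n, i ≠ j → ∃! x, f i x = f j x)
    (hno3 : ¬ ∃ (x : ℝ) (i j k : Fin n), i ≠ j ∧ j ≠ k ∧ i ≠ k ∧
      f i x = f j x ∧ f j x = f k x)
    {b1 b2 t1 t2 : Fin n} (hb : b1 ≠ b2) (ht : t1 ≠ t2)
    (h11 : B f b1 t1) (h12 : B f b1 t2) (h21 : B f b2 t1) (h22 : B f b2 t2) :
    False := by
  have tri : ∀ {i j k : Fin n} {x : ℝ}, i ≠ j → j ≠ k → i ≠ k →
      f i x = f j x → f j x = f k x → False :=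
    fun h1 h2 h3 e1 e2 => hno3 ⟨_, _, _, _, h1, h2, h3, e1, e2⟩
  obtain ⟨x11, e11⟩ := (hone b1 t1 h11.1).exists
  obtain ⟨x12, e12⟩ := (hone b1 t2 h12.1).exists
  obtain ⟨x21, e21⟩ := (hone b2 t1 h21.1).exists
  obtain ⟨x22, e22⟩ := (hone b2 t2 h22.1).exists
  -- strict sign facts
  have s11b : f b2 x11 < f b1 x11 := by
    rcases (h21.2 x11).lt_or_eq with h | h
    · linarith [e11]
    · exact (tri h11.1 (Ne.symm h21.1) hb e11 h.symm).elim
  have s11t : f t1 x11 < f t2 x11 := by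
    rcases (h12.2 x11).lt_or_eq with h | h
    · linarith [e11]
    · exact (tri h11.1 ht h12.1 e11 (e11.symm.trans h)).elim
  have s12b : f b2 x12 < f b1 x12 := by
    rcases (h22.2 x12).lt_or_eq with h | h
    · linarith [e12]
    · exact (tri h12.1 (Ne.symm h22.1) hb e12 h.symm).elim
  have s12t : f t2 x12 < f t1 x12 := by
    rcases (h11.2 x12).lt_or_eq with h | h
    · linarith [e12]
    · exact (tri h12.1 (Ne.symm ht) h11.1 e12 (e12.symm.trans h)).elim
  have s21b : f b1 x21 < f b2 x21 := by
    rcases (h11.2 x21).lt_or_eq with h | h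
    · linarith [e21]
    · exact (tri h21.1 (Ne.symm h11.1) (Ne.symm hb) e21 h.symm).elim
  have s21t : f t1 x21 < f t2 x21 := by
    rcases (h22.2 x21).lt_or_eq with h | h
    · linarith [e21]
    · exact (tri h21.1 ht h22.1 e21 (e21.symm.trans h)).elim
  have s22b : f b1 x22 < f b2 x22 := by
    rcases (h12.2 x22).lt_or_eq with h | h
    · linarith [e22]
    · exact (tri h22.1 (Ne.symm h12.1) (Ne.symm hb) e22 h.symm).elim
  have s22t : f t2 x22 < f t1 x22 := by
    rcases (h21.2 x22).lt_or_eq with h | h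
    · linarith [e22]
    · exact (tri h22.1 (Ne.symm ht) h21.1 e22 (e22.symm.trans h)).elim
  -- crossing point of b1, b2
  obtain ⟨p, hpe, d1⟩ := cross hcont (i := b1) (j := b2) s11b s21b
  obtain ⟨p2, hpe2, d2⟩ := cross hcont (i := b1) (j := b2) s11b s22b
  obtain ⟨p3, hpe3, d3⟩ := cross hcont (i := b1) (j := b2) s12b s21b
  obtain ⟨p4, hpe4, d4⟩ := cross hcont (i := b1) (j := b2) s12b s22b
  have := uniq hone hb hpe2 hpe; subst this
  have := uniq hone hb hpe3 hpe; subst this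
  have := uniq hone hb hpe4 hpe; subst this
  -- crossing point of t1, t2
  obtain ⟨q, hqe, g1⟩ := cross hcont (i := t1) (j := t2) s12t s11t
  obtain ⟨q2, hqe2, g2⟩ := cross hcont (i := t1) (j := t2) s12t s21t
  obtain ⟨q3, hqe3, g3⟩ := cross hcont (i := t1) (j := t2) s22t s11t
  obtain ⟨q4, hqe4, g4⟩ := cross hcont (i := t1) (j := t2) s22t s21t
  have := uniq hone ht hqe2 hqe; subst this
  have := uniq hone ht hqe3 hqe; subst this
  have := uniq hone ht hqe4 hqe; subst this
  rcases d1 with ⟨h1a, h1b⟩ | ⟨h1a, h1b⟩ <;>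
    rcases d2 with ⟨h2a, h2b⟩ | ⟨h2a, h2b⟩ <;>
    rcases d3 with ⟨h3a, h3b⟩ | ⟨h3a, h3b⟩ <;>
    rcases d4 with ⟨h4a, h4b⟩ | ⟨h4a, h4b⟩ <;>
    rcases g1 with ⟨k1a, k1b⟩ | ⟨k1a, k1b⟩ <;>
    rcases g2 with ⟨k2a, k2b⟩ | ⟨k2a, k2b⟩ <;>
    rcases g3 with ⟨k3a, k3b⟩ | ⟨k3a, k3b⟩ <;>
    rcases g4 with ⟨k4a, k4b⟩ | ⟨k4a, k4b⟩ <;>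
    linarith

lemma atmost_one_partner (hcont : ∀ i, Continuous (f i))
    (hone : ∀ i j : Fin n, i ≠ j → ∃! x, f i x = f j x)
    (hno3 : ¬ ∃ (x : ℝ) (i j k : Fin n), i ≠ j ∧ j ≠ k ∧ i ≠ k ∧
      f i x = f j x ∧ f j x = f k x)
    (S : Finset (Fin n)) (hS : S.Nonempty) :
    ∃ v ∈ S, ∀ u w : Fin n, u ∈ S → w ∈ S →
      (u ≠ v ∧ Tangent (f v) (f u)) → (w ≠ v ∧ Tangent (f v) (f w)) → u = w := by
  classical
  by_contra hcon
  push_neg at hcon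
  -- far-left and far-right reference points
  have habs : ∃ a b : ℝ, ∀ (i j : Fin n) (x : ℝ), i ≠ j → f i x = f j x →
      a < x ∧ x < b := by
    set c : Fin n × Fin n → ℝ := fun p =>
      if h : p.1 ≠ p.2 then Classical.choose (hone p.1 p.2 h) else 0 with hc
    set X : Finset ℝ := Finset.image c Finset.univ with hX
    have hmem : ∀ (i j : Fin n) (x : ℝ), i ≠ j → f i x = f j x → x ∈ X := by
      intro i j x hij hx
      have hspec := Classical.choose_spec (hone i j hij)
      have hxc : x = c (i, j) := by
        simp only [hc, dif_pos hij]
        exact hspec.2 x hx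
      rw [hxc, hX]
      exact Finset.mem_image_of_mem c (Finset.mem_univ _)
    by_cases hXne : X.Nonempty
    · refine ⟨X.min' hXne - 1, X.max' hXne + 1, fun i j x hij hx => ?_⟩
      have h1 := X.min'_le x (hmem i j x hij hx)
      have h2 := X.le_max' x (hmem i j x hij hx)
      constructor <;> linarith
    · exact ⟨0, 0, fun i j x hij hx => absurd ⟨x, hmem i j x hij hx⟩ hXne⟩
  obtain ⟨a, b, bound⟩ := habs
  have sep_a : ∀ {i j : Fin n}, i ≠ j → f i a ≠ f j a :=
    fun hij h => absurd (bound _ _ _ hij h).1 (lt_irrefl a)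
  have sep_b : ∀ {i j : Fin n}, i ≠ j → f i b ≠ f j b :=
    fun hij h => absurd (bound _ _ _ hij h).2 (lt_irrefl b)
  have Ba : ∀ {i j : Fin n}, B f i j → f i a < f j a :=
    fun h => (h.2 a).lt_of_ne (sep_a h.1)
  have Bb : ∀ {i j : Fin n}, B f i j → f i b < f j b :=
    fun h => (h.2 b).lt_of_ne (sep_b h.1)
  have abB : ∀ {i j : Fin n}, i ≠ j → f i a < f j a → f i b < f j b → B f i j := by
    intro i j hij h1 h2
    refine ⟨hij, fun y => ?_⟩
    by_contra hy
    push_neg at hy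
    obtain ⟨p, hpe, hp⟩ := cross hcont (u := y) (v := a) hy h1
    obtain ⟨p', hpe', hp'⟩ := cross hcont (u := y) (v := b) hy h2
    have hpp : p' = p := uniq hone hij hpe' hpe
    subst hpp
    have hb := bound _ _ _ hij hpe
    rcases hp with ⟨h3, h4⟩ | ⟨h3, h4⟩ <;> rcases hp' with ⟨h5, h6⟩ | ⟨h5, h6⟩ <;>
      linarith [hb.1, hb.2]
  have tangent_iff : ∀ {i j : Fin n}, i ≠ j →
      (Tangent (f i) (f j) ↔ B f i j ∨ B f j i) := by
    intro i j hij
    constructor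
    · rintro ⟨-, hc⟩
      exact hc.imp (fun h => ⟨hij, h⟩) (fun h => ⟨hij.symm, h⟩)
    · intro h
      exact ⟨hone i j hij, h.imp And.right And.right⟩
  -- the maximum curve at a
  obtain ⟨t, htS, htmax⟩ := S.exists_max_image (fun i => f i a) hS
  -- two distinct partners of t, both below t
  obtain ⟨u0, w0, hu0S, hw0S, hu0, hw0, huw0⟩ := hcon t htS
  have toBot : ∀ {u : Fin n}, u ∈ S → u ≠ t → Tangent (f t) (f u) → B f u t := by
    intro u huS hut htang
    rcases (tangent_iff (Ne.symm hut)).mp htang with h | h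
    · exact absurd (Ba h) (not_lt.mpr (htmax u huS))
    · exact h
  have hb1t : B f u0 t := toBot hu0S hu0.1 hu0.2
  have hb2t : B f w0 t := toBot hw0S hw0.1 hw0.2
  set b1 := u0
  set b2 := w0
  have hbne : b1 ≠ b2 := huw0
  -- second partner of b1, above b1, distinct from t
  have toTop : ∀ {v u : Fin n}, B f v t → u ≠ v → Tangent (f v) (f u) → B f v u := by
    intro v u hvt hut htang
    rcases (tangent_iff (Ne.symm hut)).mp htang with h | h
    · exact h
    · -- B f u v
      by_cases hutt : u = t
      · subst hutt; exact absurd hvt (fun hvt => asymB hone h hvt)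
      · exact absurd hutt (fun _ => no3 hone hno3 h hvt hutt)
  have getSecond : ∀ {v : Fin n}, v ∈ S → B f v t →
      ∃ ta, ta ∈ S ∧ ta ≠ t ∧ B f v ta := by
    intro v hvS hvt
    obtain ⟨u, w, huS, hwS, hu, hw, huw⟩ := hcon v hvS
    by_cases hut : u = t
    · subst hut
      exact ⟨w, hwS, Ne.symm huw, toTop hvt hw.1 hw.2⟩
    · exact ⟨u, huS, hut, toTop hvt hu.1 hu.2⟩
  obtain ⟨ta, htaS, htat, hb1ta⟩ := getSecond hu0S hb1t
  obtain ⟨tc, htcS, htct, hb2tc⟩ := getSecond hw0S hb2t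
  have htanet : t ≠ ta := Ne.symm htat
  have htcnet : t ≠ tc := Ne.symm htct
  by_cases hac : ta = tc
  · exact c4 hcont hone hno3 hbne htanet hb1t (hac ▸ hb1ta) hb2t (hac ▸ hb2tc)
  -- facts about ta
  have m1 : f ta a < f t a := (htmax ta htaS).lt_of_ne (sep_a htat)
  have nBtat : ¬ B f ta t := fun h => no3 hone hno3 hb1ta h hb1t.1
  have m2 : f t b < f ta b := by
    rcases lt_or_gt_of_ne (sep_b htat) with h | h
    · exact absurd (abB htat m1 h) nBtat
    · exact h
  have hb2ta : b2 ≠ ta := by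
    intro h
    exact no3 hone hno3 (h ▸ hb1ta) hb2t hb1t.1
  have nB2a : ¬ B f b2 ta := fun h => c4 hcont hone hno3 hbne htanet hb1t hb1ta hb2t h
  have m3 : f b2 b < f ta b := lt_trans (Bb hb2t) m2
  have m4 : f ta a < f b2 a := by
    rcases lt_or_gt_of_ne (sep_a (Ne.symm hb2ta)) with h | h
    · exact h
    · exact absurd (abB hb2ta h m3) nB2a
  have m5 : f b1 a < f ta a := Ba hb1ta
  have mA : f b1 a < f b2 a := lt_trans m5 m4
  -- symmetric facts about tc
  have m1' : f tc a < f t a := (htmax tc htcS).lt_of_ne (sep_a htct)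
  have nBtct : ¬ B f tc t := fun h => no3 hone hno3 hb2tc h hb2t.1
  have m2' : f t b < f tc b := by
    rcases lt_or_gt_of_ne (sep_b htct) with h | h
    · exact absurd (abB htct m1' h) nBtct
    · exact h
  have hb1tc : b1 ≠ tc := by
    intro h
    exact no3 hone hno3 (h ▸ hb2tc) hb1t hb2t.1
  have nB1c : ¬ B f b1 tc := fun h => c4 hcont hone hno3 hbne htcnet hb1t h hb2t hb2tc
  have m3' : f b1 b < f tc b := lt_trans (Bb hb1t) m2'
  have m4' : f tc a < f b1 a := by
    rcases lt_or_gt_of_ne (sep_a (Ne.symm hb1tc)) with h | h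
    · exact h
    · exact absurd (abB hb1tc h m3') nB1c
  have m5' : f b2 a < f tc a := Ba hb2tc
  have mB : f b2 a < f b1 a := lt_trans m5' m4'
  linarith

end Stmt5Aux

theorem stmt5 (n : ℕ) (hn : 1 ≤ n) (f : Fin n → ℝ → ℝ)
    (hcont : ∀ i, Continuous (f i))
    (hdist : Function.Injective f)
    (hone : ∀ i j : Fin n, i ≠ j → ∃! x, f i x = f j x)
    (hno3 : ¬ ∃ (x : ℝ) (i j k : Fin n), i ≠ j ∧ j ≠ k ∧ i ≠ k ∧
      f i x = f j x ∧ f j x = f k x) :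
    {p : Fin n × Fin n | p.1 < p.2 ∧ Tangent (f p.1) (f p.2)}.ncard ≤ n - 1 := by
  classical
  have count : ∀ (k : ℕ) (S : Finset (Fin n)), S.card ≤ k → S.Nonempty →
      (Finset.univ.filter (fun p : Fin n × Fin n =>
        p.1 ∈ S ∧ p.2 ∈ S ∧ p.1 < p.2 ∧ Tangent (f p.1) (f p.2))).card + 1 ≤ S.card := by
    intro k
    induction k with
    | zero =>
      intro S hk hS
      have := Finset.card_pos.mpr hS
      omega
    | succ k ih =>
      intro S hk hS
      obtain ⟨v, hvS, hv⟩ := Stmt5Aux.atmost_one_partner hcont hone hno3 S hS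
      have hcardS : S.card = (S.erase v).card + 1 := by
        rw [Finset.card_erase_of_mem hvS]
        have := Finset.card_pos.mpr hS
        omega
      have hsub : (Finset.univ.filter (fun p : Fin n × Fin n =>
            p.1 ∈ S ∧ p.2 ∈ S ∧ p.1 < p.2 ∧ Tangent (f p.1) (f p.2))) ⊆
          (Finset.univ.filter (fun p : Fin n × Fin n =>
            p.1 ∈ S.erase v ∧ p.2 ∈ S.erase v ∧ p.1 < p.2 ∧ Tangent (f p.1) (f p.2))) ∪
          ((Finset.univ.filter (fun p : Fin n × Fin n =>
            p.1 ∈ S ∧ p.2 ∈ S ∧ p.1 < p.2 ∧ Tangent (f p.1) (f p.2))).filter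
            (fun p => p.1 = v ∨ p.2 = v)) := by
        intro p hp
        simp only [Finset.mem_filter, Finset.mem_univ, true_and] at hp
        rw [Finset.mem_union]
        by_cases h1 : p.1 = v ∨ p.2 = v
        · right
          simp only [Finset.mem_filter, Finset.mem_univ, true_and]
          exact ⟨hp, h1⟩
        · left
          push_neg at h1
          simp only [Finset.mem_filter, Finset.mem_univ, true_and, Finset.mem_erase]
          exact ⟨⟨h1.1, hp.1⟩, ⟨h1.2, hp.2.1⟩, hp.2.2⟩
      have honecard : ((Finset.univ.filter (fun p : Fin n × Fin n =>
            p.1 ∈ S ∧ p.2 ∈ S ∧ p.1 < p.2 ∧ Tangent (f p.1) (f p.2))).filter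
            (fun p => p.1 = v ∨ p.2 = v)).card ≤ 1 := by
        rw [Finset.card_le_one]
        intro p hp q hq
        simp only [Finset.mem_filter, Finset.mem_univ, true_and] at hp hq
        obtain ⟨⟨hp1S, hp2S, hplt, hpt⟩, hpv⟩ := hp
        obtain ⟨⟨hq1S, hq2S, hqlt, hqt⟩, hqv⟩ := hq
        -- other endpoint of p
        have hop : ∀ (r : Fin n × Fin n), r.1 ∈ S → r.2 ∈ S → r.1 < r.2 →
            Tangent (f r.1) (f r.2) → (r.1 = v ∨ r.2 = v) →
            ∃ o, o ∈ S ∧ (o ≠ v ∧ Tangent (f v) (f o)) ∧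
              ((r.1 = v ∧ r.2 = o) ∨ (r.2 = v ∧ r.1 = o)) := by
          rintro r hr1 hr2 hrlt hrt (h | h)
          · exact ⟨r.2, hr2, ⟨fun he => by simp [h, he] at hrlt,
              by rw [← h]; exact hrt⟩, Or.inl ⟨h, rfl⟩⟩
          · exact ⟨r.1, hr1, ⟨fun he => by simp [h, he] at hrlt,
              by rw [← h]; exact Stmt5Aux.tangent_symm hrt⟩, Or.inr ⟨h, rfl⟩⟩
        obtain ⟨o1, ho1S, ho1, hc1⟩ := hop p hp1S hp2S hplt hpt hpv
        obtain ⟨o2, ho2S, ho2, hc2⟩ := hop q hq1S hq2S hqlt hqt hqv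
        have : o1 = o2 := hv o1 o2 ho1S ho2S ho1 ho2
        subst this
        rcases hc1 with ⟨hp1, hp2⟩ | ⟨hp1, hp2⟩ <;> rcases hc2 with ⟨hq1, hq2⟩ | ⟨hq1, hq2⟩
        · exact Prod.ext (hp1.trans hq1.symm) (hp2.trans hq2.symm)
        · exfalso
          rw [hp1, hp2] at hplt
          rw [hq1, hq2] at hqlt
          exact lt_irrefl _ (lt_trans hplt hqlt)
        · exfalso
          rw [hp1, hp2] at hplt
          rw [hq1, hq2] at hqlt
          exact lt_irrefl _ (lt_trans hplt hqlt)
        · exact Prod.ext (hp2.trans hq2.symm) (hp1.trans hq1.symm)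
      by_cases hS'ne : (S.erase v).Nonempty
      · have h2 := ih (S.erase v) (by omega) hS'ne
        have h3 := (Finset.card_le_card hsub).trans (Finset.card_union_le _ _)
        omega
      · have hempty : (Finset.univ.filter (fun p : Fin n × Fin n =>
            p.1 ∈ S ∧ p.2 ∈ S ∧ p.1 < p.2 ∧ Tangent (f p.1) (f p.2))) = ∅ := by
          apply Finset.eq_empty_of_forall_notMem
          intro p hp
          simp only [Finset.mem_filter, Finset.mem_univ, true_and] at hp
          have hall : ∀ u ∈ S, u = v := by
            intro u huS
            by_contra hne
            exact hS'ne ⟨u, Finset.mem_erase.mpr ⟨hne, huS⟩⟩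
          have e1 := hall p.1 hp.1
          have e2 := hall p.2 hp.2.1
          rw [e1, e2] at hp
          exact lt_irrefl v hp.2.2.1
        rw [hempty]
        simpa using Finset.card_pos.mpr hS
  have hfin : {p : Fin n × Fin n | p.1 < p.2 ∧ Tangent (f p.1) (f p.2)} =
      ↑(Finset.univ.filter (fun p : Fin n × Fin n =>
        p.1 ∈ (Finset.univ : Finset (Fin n)) ∧ p.2 ∈ (Finset.univ : Finset (Fin n)) ∧
        p.1 < p.2 ∧ Tangent (f p.1) (f p.2))) := by
    ext p
    simp [Set.mem_setOf_eq]
  rw [hfin, Set.ncard_coe_finset]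
  have hne : (Finset.univ : Finset (Fin n)).Nonempty := ⟨⟨0, hn⟩, Finset.mem_univ _⟩
  have := count n Finset.univ (by simp) hne
  simp only [Finset.card_univ, Fintype.card_fin] at this
  omega
end

section
/- For every integer k ≥ 1 there exist pairwise distinct continuous functions f_1, …, f_{2^k} : ℝ → ℝ such that every two of them have at most one common point, no three of them share a common point, and the number of tangent pairs among them is at least k · 2^{k−1}. -/
open Finset

namespace TangentFamily

noncomputable section

section Quadratic

variable {a s c u v : ℝ}

lemma quadratic_ne_zero_of_sq_lt (h : s ^ 2 < a * c) : a * u ^ 2 - 2 * s * u + c ≠ 0 := by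
  intro hq
  have key : a * (a * u ^ 2 - 2 * s * u + c) = (a * u - s) ^ 2 + (a * c - s ^ 2) := by ring
  rw [hq, mul_zero] at key
  nlinarith [sq_nonneg (a * u - s)]

lemma eq_of_quadratic_eq_zero (ha : 0 < a) (hc : 0 < c) (hu : 0 < u) (hv : 0 < v)
    (hqu : a * u ^ 2 - 2 * s * u - c = 0) (hqv : a * v ^ 2 - 2 * s * v - c = 0) : u = v := by
  by_contra huv
  have hsum : a * (u + v) = 2 * s := by
    have : (u - v) * (a * (u + v) - 2 * s) = 0 := by linear_combination hqu - hqv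
    linarith [(mul_eq_zero.mp this).resolve_left (sub_ne_zero.mpr huv)]
  have hprod : a * (u * v) = -c := by linear_combination u * hsum - hqu
  nlinarith [mul_pos ha (mul_pos hu hv)]

lemma quadratic_root_bounds (ha : 0 < a) (hc : 0 < c) (hu : 0 < u) (hs : 8 * s ^ 2 < a * c)
    (hq : a * u ^ 2 - 2 * s * u - c = 0) : c < 2 * (a * u ^ 2) ∧ a * u ^ 2 < 2 * c := by
  constructor
  · by_contra! h
    have h1 : c ≤ -4 * s * u := by linarith
    have h2 : c * c ≤ 16 * s ^ 2 * u ^ 2 := by nlinarith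
    nlinarith [mul_le_mul_of_nonneg_left h2 ha.le, mul_le_mul_of_nonneg_left h (sq_nonneg s)]
  · by_contra! h
    have h1 : a * u ≤ 4 * s := by nlinarith
    have h2 : a * u * (a * u) ≤ 16 * s ^ 2 := by nlinarith [mul_pos ha hu]
    nlinarith [mul_le_mul_of_nonneg_left h ha.le]

end Quadratic

def scale (t : ℝ) (j : ℕ) : ℝ := t ^ 4 ^ j

def bump (t : ℝ) (j : ℕ) (u : ℝ) : ℝ := scale t j * (u - (scale t j)⁻¹) ^ 2

def bumpSum {k : ℕ} (t : ℝ) (σ : Fin k → ℤ) (u : ℝ) : ℝ := ∑ j, σ j * bump t j u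

def leadCoeff {k : ℕ} (t : ℝ) (σ : Fin k → ℤ) : ℝ := ∑ j, σ j * scale t j

def constCoeff {k : ℕ} (t : ℝ) (σ : Fin k → ℤ) : ℝ := ∑ j, σ j * (scale t j)⁻¹

section Scale

variable {t : ℝ} {i j : ℕ}

lemma scale_pos (ht : 0 < t) : 0 < scale t j := pow_pos ht _

lemma mul_scale_le_scale (ht : 1 ≤ t) (hij : i < j) : t * scale t i ≤ scale t j := by
  rw [scale, scale, ← pow_succ']
  exact pow_le_pow_right₀ ht (Nat.pow_lt_pow_right (by norm_num) hij)

lemma scale_mul_scale : scale t i * scale t j = t ^ (4 ^ i + 4 ^ j) := (pow_add _ _ _).symm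

lemma bump_nonneg (ht : 0 < t) (u : ℝ) : 0 ≤ bump t j u :=
  mul_nonneg (scale_pos ht).le (sq_nonneg _)

lemma bump_eq_zero_iff (ht : 0 < t) {u : ℝ} : bump t j u = 0 ↔ u = (scale t j)⁻¹ := by
  simp [bump, (scale_pos ht).ne', sub_eq_zero]

lemma bump_eq (ht : 0 < t) (u : ℝ) :
    bump t j u = scale t j * u ^ 2 - 2 * u + (scale t j)⁻¹ := by
  have := (scale_pos (j := j) ht).ne'
  rw [bump]
  field_simp
  ring

end Scale

section BumpSum

variable {k : ℕ} {t : ℝ}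

lemma bumpSum_eq (ht : 0 < t) (σ : Fin k → ℤ) (u : ℝ) :
    bumpSum t σ u = leadCoeff t σ * u ^ 2 - 2 * (∑ j, (σ j : ℝ)) * u + constCoeff t σ := by
  simp only [bumpSum, leadCoeff, constCoeff, bump_eq ht, mul_add, mul_sub, sum_add_distrib,
    sum_sub_distrib, sum_mul, mul_sum]
  congr 2 <;> refine sum_congr rfl fun j _ => by ring

lemma bumpSum_sub (σ τ : Fin k → ℤ) (u : ℝ) :
    bumpSum t σ u - bumpSum t τ u = bumpSum t (σ - τ) u := by
  simp only [bumpSum, ← sum_sub_distrib, Pi.sub_apply, Int.cast_sub, sub_mul]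

lemma continuous_bumpSum (σ : Fin k → ℤ) : Continuous (bumpSum t σ) := by
  unfold bumpSum bump
  fun_prop

lemma abs_sum_le_card {σ : Fin k → ℤ} (hσ : ∀ j, |σ j| ≤ 1) : |∑ j, (σ j : ℝ)| ≤ k := by
  calc |∑ j, (σ j : ℝ)| ≤ ∑ j, |(σ j : ℝ)| := abs_sum_le_sum_abs _ _
    _ ≤ ∑ _j : Fin k, (1 : ℝ) := sum_le_sum fun j _ => by exact_mod_cast hσ j
    _ = k := by simp

lemma abs_sum_sub_single_le {σ : Fin k → ℤ} (hσ : ∀ j, |σ j| ≤ 1) (x : Fin k → ℝ) (J : Fin k)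
    {ε : ℝ} (hε : 0 ≤ ε) (hx : ∀ j ≠ J, σ j ≠ 0 → |x j| ≤ ε) :
    |∑ j, σ j * x j - σ J * x J| ≤ k * ε := by
  rw [← sum_erase_add _ _ (mem_univ J), add_sub_cancel_right]
  have hterm : ∀ j ∈ univ.erase J, |(σ j : ℝ) * x j| ≤ ε := by
    intro j hj
    by_cases h0 : σ j = 0
    · simpa [h0] using hε
    · rw [abs_mul]
      calc |(σ j : ℝ)| * |x j| ≤ 1 * ε := by
            gcongr
            · exact_mod_cast hσ j
            · exact hx j (ne_of_mem_erase hj) h0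
        _ = ε := one_mul ε
  calc |∑ j ∈ univ.erase J, (σ j : ℝ) * x j| ≤ ∑ j ∈ univ.erase J, |(σ j : ℝ) * x j| :=
        abs_sum_le_sum_abs _ _
    _ ≤ (univ.erase J).card * ε := by simpa using sum_le_sum hterm
    _ ≤ k * ε := by
        gcongr
        simp

end BumpSum

lemma eq_of_pow_mul_mem_Ioo {t x : ℝ} (ht : 64 ≤ t) {E F : ℕ}
    (hE : t ^ E * x ∈ Set.Ioo (1 / 8) 8) (hF : t ^ F * x ∈ Set.Ioo (1 / 8) 8) : E = F := by
  obtain ⟨hE₁, hE₂⟩ := hE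
  obtain ⟨hF₁, hF₂⟩ := hF
  wlog hEF : E ≤ F generalizing E F
  · exact (this hF₁ hF₂ hE₁ hE₂ (le_of_not_ge hEF)).symm
  refine hEF.eq_or_lt.resolve_right fun hlt => ?_
  have hpow : t ^ E * t ≤ t ^ F := by
    rw [← pow_succ]
    exact pow_le_pow_right₀ (by linarith) hlt
  have hx : 0 < x := by
    by_contra! hx
    nlinarith [pow_pos (show 0 < t by linarith) E]
  nlinarith [mul_le_mul_of_nonneg_right hpow hx.le]

lemma four_pow_add_four_pow_lt {m J J' : ℕ} (hmJ : m ≤ J) (hJ : J < J') :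
    4 ^ m + 4 ^ J < 4 ^ J' :=
  calc 4 ^ m + 4 ^ J < 4 * 4 ^ J := by
        have := Nat.pow_le_pow_right (by norm_num : 0 < 4) hmJ
        have := pow_pos (by norm_num : 0 < 4) J
        omega
    _ = 4 ^ (J + 1) := (pow_succ' 4 J).symm
    _ ≤ 4 ^ J' := Nat.pow_le_pow_right (by norm_num) hJ

lemma four_pow_add_four_pow_inj {m J m' J' : ℕ} (hmJ : m ≤ J) (hmJ' : m' ≤ J')
    (h : 4 ^ m + 4 ^ J = 4 ^ m' + 4 ^ J') : m = m' ∧ J = J' := by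
  obtain rfl : J = J' := by
    rcases lt_trichotomy J J' with hJ | hJ | hJ
    · have := four_pow_add_four_pow_lt hmJ hJ
      have := pow_pos (by norm_num : 0 < 4) m'
      omega
    · exact hJ
    · have := four_pow_add_four_pow_lt hmJ' hJ
      have := pow_pos (by norm_num : 0 < 4) m
      omega
  exact ⟨Nat.pow_right_injective (by norm_num) (Nat.add_right_cancel h), rfl⟩

lemma isUnit_of_abs_le_one {z : ℤ} (h : |z| ≤ 1) (h0 : z ≠ 0) : IsUnit z := by
  rw [abs_le] at h
  exact Int.isUnit_iff.mpr (by omega)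

lemma abs_unit_mul_sum_sub_le {k : ℕ} {σ : Fin k → ℤ} (hσ : ∀ j, |σ j| ≤ 1) {J : Fin k}
    (hJ : IsUnit (σ J)) {x : Fin k → ℝ} {t : ℝ} (ht : 2 * k ≤ t) (hxJ : 0 < x J)
    (hx : ∀ j ≠ J, σ j ≠ 0 → |x j| * t ≤ x J) :
    |σ J * ∑ j, σ j * x j - x J| ≤ x J / 2 := by
  have ht0 : 0 < t := lt_of_lt_of_le (by exact_mod_cast Nat.mul_pos two_pos J.pos) ht
  have hdom : |∑ j, σ j * x j - σ J * x J| ≤ k * (x J / t) :=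
    abs_sum_sub_single_le hσ x J (by positivity) fun j hjJ hj => by
      rw [le_div_iff₀ ht0]
      exact hx j hjJ hj
  have hkt : k * (x J / t) ≤ x J / 2 := by
    rw [mul_div_assoc', div_le_div_iff₀ ht0 two_pos]
    nlinarith
  calc |σ J * ∑ j, σ j * x j - x J| = |(σ J : ℝ)| * |∑ j, σ j * x j - σ J * x J| := by
        rw [← abs_mul]
        congr 1
        linear_combination x J * (by exact_mod_cast Int.isUnit_mul_self hJ : (σ J : ℝ) * σ J = 1)
    _ ≤ x J / 2 := by
        rw [(by exact_mod_cast Int.isUnit_iff_abs_eq.mp hJ : |(σ J : ℝ)| = 1), one_mul]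
        exact hdom.trans hkt

structure SupportEnds {k : ℕ} (σ : Fin k → ℤ) (m J : Fin k) : Prop where
  left_ne_zero : σ m ≠ 0
  right_ne_zero : σ J ≠ 0
  eq_zero_of_lt : ∀ i < m, σ i = 0
  eq_zero_of_gt : ∀ i, J < i → σ i = 0

lemma exists_supportEnds {k : ℕ} {σ : Fin k → ℤ} (hσ : σ ≠ 0) : ∃ m J, SupportEnds σ m J := by
  set s := univ.filter (σ · ≠ 0)
  have hs : s.Nonempty := by
    obtain ⟨j, hj⟩ := Function.ne_iff.mp hσ
    exact ⟨j, by simpa [s] using hj⟩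
  refine ⟨s.min' hs, s.max' hs, ⟨?_, ?_, fun i hi => ?_, fun i hi => ?_⟩⟩
  · simpa [s] using s.min'_mem hs
  · simpa [s] using s.max'_mem hs
  · by_contra h0
    exact (s.min'_le i (by simpa [s] using h0)).not_gt hi
  · by_contra h0
    exact (s.le_max' i (by simpa [s] using h0)).not_gt hi

namespace SupportEnds

variable {k : ℕ} {σ : Fin k → ℤ} {m J : Fin k} {t u : ℝ}

lemma le (h : SupportEnds σ m J) : m ≤ J :=
  not_lt.mp fun hJm => h.left_ne_zero (h.eq_zero_of_gt m hJm)

lemma lt_right (h : SupportEnds σ m J) {j : Fin k} (hj : σ j ≠ 0) (hjJ : j ≠ J) : j < J :=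
  lt_of_le_of_ne (not_lt.mp fun hJj => hj (h.eq_zero_of_gt j hJj)) hjJ

lemma left_lt (h : SupportEnds σ m J) {j : Fin k} (hj : σ j ≠ 0) (hjm : j ≠ m) : m < j :=
  lt_of_le_of_ne (not_lt.mp fun hjm' => hj (h.eq_zero_of_lt j hjm')) hjm.symm

lemma isUnit_left (hσ : ∀ j, |σ j| ≤ 1) (h : SupportEnds σ m J) : IsUnit (σ m) :=
  isUnit_of_abs_le_one (hσ m) h.left_ne_zero

lemma isUnit_right (hσ : ∀ j, |σ j| ≤ 1) (h : SupportEnds σ m J) : IsUnit (σ J) :=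
  isUnit_of_abs_le_one (hσ J) h.right_ne_zero

lemma eq_zero_of_ne (h : SupportEnds σ m m) {j : Fin k} (hj : j ≠ m) : σ j = 0 :=
  by_contra fun h0 => (h.lt_right h0 hj).not_gt (h.left_lt h0 hj)

lemma abs_lead_sub_scale_le (hσ : ∀ j, |σ j| ≤ 1) (h : SupportEnds σ m J) (ht : 2 * k ≤ t) :
    |σ J * leadCoeff t σ - scale t J| ≤ scale t J / 2 := by
  have ht1 : 1 ≤ t := le_trans (by have := J.pos; norm_cast; omega) ht
  have ht0 : 0 < t := by linarith
  refine abs_unit_mul_sum_sub_le hσ (h.isUnit_right hσ) ht (scale_pos ht0) fun j hjJ hj => ?_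
  rw [abs_of_pos (scale_pos ht0), mul_comm]
  exact mul_scale_le_scale ht1 (h.lt_right hj hjJ)

lemma abs_const_sub_scale_le (hσ : ∀ j, |σ j| ≤ 1) (h : SupportEnds σ m J) (ht : 2 * k ≤ t) :
    |σ m * constCoeff t σ - (scale t m)⁻¹| ≤ (scale t m)⁻¹ / 2 := by
  have ht1 : 1 ≤ t := le_trans (by have := J.pos; norm_cast; omega) ht
  have ht0 : 0 < t := by linarith
  refine abs_unit_mul_sum_sub_le hσ (h.isUnit_left hσ) ht (inv_pos.mpr (scale_pos ht0))
    fun j hjm hj => ?_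
  rw [abs_of_pos (inv_pos.mpr (scale_pos ht0)), inv_mul_le_iff₀ (scale_pos ht0),
    le_mul_inv_iff₀ (scale_pos ht0)]
  exact mul_scale_le_scale ht1 (h.left_lt hj hjm)

lemma exists_quadratic (hσ : ∀ j, |σ j| ≤ 1) (h : SupportEnds σ m J) (hmJ : m < J)
    (ht : 64 * k ^ 2 ≤ t) :
    ∃ a s c : ℝ, |a - scale t J| ≤ scale t J / 2 ∧ |c - (scale t m)⁻¹| ≤ (scale t m)⁻¹ / 2 ∧
      8 * s ^ 2 < a * c ∧ ∀ u, σ J * bumpSum t σ u = a * u ^ 2 - 2 * s * u + σ m * σ J * c := by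
  have hk : (1 : ℝ) ≤ k := by exact_mod_cast J.pos
  have ht2 : 2 * k ≤ t := by nlinarith
  have ht0 : 0 < t := by linarith
  have hA := abs_le.mp (h.abs_lead_sub_scale_le hσ ht2)
  have hC := abs_le.mp (h.abs_const_sub_scale_le hσ ht2)
  have hP := scale_pos (j := J) ht0
  have hQ := scale_pos (j := m) ht0
  have hPQ : t ≤ scale t J * (scale t m)⁻¹ := by
    rw [le_mul_inv_iff₀ hQ]
    exact mul_scale_le_scale (by linarith) hmJ
  have hS := abs_sum_le_card hσ
  refine ⟨σ J * leadCoeff t σ, σ J * ∑ j, (σ j : ℝ), σ m * constCoeff t σ,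
    h.abs_lead_sub_scale_le hσ ht2, h.abs_const_sub_scale_le hσ ht2, ?_, fun u => ?_⟩
  · have hac : scale t J / 2 * ((scale t m)⁻¹ / 2) ≤
        σ J * leadCoeff t σ * (σ m * constCoeff t σ) :=
      mul_le_mul (by linarith) (by linarith) (by positivity) (by linarith)
    have hs : (σ J * ∑ j, (σ j : ℝ)) ^ 2 ≤ k ^ 2 := by
      rw [mul_pow, ← sq_abs (σ J : ℝ),
        (by exact_mod_cast Int.isUnit_iff_abs_eq.mp (h.isUnit_right hσ) : |(σ J : ℝ)| = 1),
        one_pow, one_mul]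
      exact sq_le_sq' (abs_le.mp hS).1 (abs_le.mp hS).2
    nlinarith
  · rw [bumpSum_eq ht0]
    have hm : (σ m : ℝ) * σ m = 1 := by exact_mod_cast Int.isUnit_mul_self (h.isUnit_left hσ)
    linear_combination (-(σ J * constCoeff t σ)) * hm

lemma root_eq_inv_scale (h : SupportEnds σ m m) (ht : 0 < t) (hu : bumpSum t σ u = 0) :
    u = (scale t m)⁻¹ := by
  have hsingle : bumpSum t σ u = σ m * bump t m u :=
    Fintype.sum_eq_single m fun j hj => by simp [h.eq_zero_of_ne hj]
  rw [hsingle] at hu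
  exact (bump_eq_zero_iff ht).mp
    ((mul_eq_zero.mp hu).resolve_left (Int.cast_ne_zero.mpr h.left_ne_zero))

/-- If the extreme coordinates of `σ` had equal signs, the quadratic would have no root at all. -/
lemma exists_quadratic_of_root (hσ : ∀ j, |σ j| ≤ 1) (h : SupportEnds σ m J) (hmJ : m < J)
    (ht : 64 * k ^ 2 ≤ t) {u₀ : ℝ} (hu₀ : bumpSum t σ u₀ = 0) :
    ∃ a s c : ℝ, |a - scale t J| ≤ scale t J / 2 ∧ |c - (scale t m)⁻¹| ≤ (scale t m)⁻¹ / 2 ∧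
      8 * s ^ 2 < a * c ∧ ∀ u, bumpSum t σ u = 0 → a * u ^ 2 - 2 * s * u - c = 0 := by
  obtain ⟨a, s, c, hA, hC, hs, hform⟩ := h.exists_quadratic hσ hmJ ht
  have hsign : σ m * σ J = -1 := by
    refine (Int.isUnit_iff.mp ((h.isUnit_left hσ).mul (h.isUnit_right hσ))).resolve_left
      fun h1 => ?_
    have := hform u₀
    rw [hu₀, mul_zero, ← Int.cast_mul, h1, Int.cast_one, one_mul] at this
    exact quadratic_ne_zero_of_sq_lt (by linarith [sq_nonneg s]) this.symm
  refine ⟨a, s, c, hA, hC, hs, fun u hu => ?_⟩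
  have := hform u
  rw [hu, mul_zero, ← Int.cast_mul, hsign] at this
  linear_combination -this

lemma root_unique (hσ : ∀ j, |σ j| ≤ 1) (h : SupportEnds σ m J) (ht : 64 * k ^ 2 ≤ t)
    {v : ℝ} (hu : 0 < u) (hv : 0 < v) (hqu : bumpSum t σ u = 0) (hqv : bumpSum t σ v = 0) :
    u = v := by
  have ht0 : 0 < t := by nlinarith [(by exact_mod_cast m.pos : (1 : ℝ) ≤ k)]
  rcases h.le.eq_or_lt with rfl | hmJ
  · rw [h.root_eq_inv_scale ht0 hqu, h.root_eq_inv_scale ht0 hqv]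
  · obtain ⟨a, s, c, hA, hC, -, hroot⟩ := h.exists_quadratic_of_root hσ hmJ ht hqu
    have hP := scale_pos (j := J) ht0
    have hQ := inv_pos.mpr (scale_pos (j := m) ht0)
    exact eq_of_quadratic_eq_zero (by linarith [abs_le.mp hA]) (by linarith [abs_le.mp hC])
      hu hv (hroot u hqu) (hroot v hqv)

lemma root_scale_bounds (hσ : ∀ j, |σ j| ≤ 1) (h : SupportEnds σ m J) (ht : 64 * k ^ 2 ≤ t)
    (hu : 0 < u) (hq : bumpSum t σ u = 0) :
    scale t m * scale t J * u ^ 2 ∈ Set.Ioo (1 / 8) 8 := by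
  have ht0 : 0 < t := by nlinarith [(by exact_mod_cast m.pos : (1 : ℝ) ≤ k)]
  have hQ := scale_pos (j := m) ht0
  rcases h.le.eq_or_lt with rfl | hmJ
  · rw [h.root_eq_inv_scale ht0 hq, ← sq, ← mul_pow, mul_inv_cancel₀ hQ.ne', one_pow]
    norm_num
  · obtain ⟨a, s, c, hA, hC, hs, hroot⟩ := h.exists_quadratic_of_root hσ hmJ ht hq
    have hP := scale_pos (j := J) ht0
    obtain ⟨hA₁, hA₂⟩ := abs_le.mp hA
    obtain ⟨hC₁, hC₂⟩ := abs_le.mp hC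
    have hQ' := inv_pos.mpr hQ
    obtain ⟨h₁, h₂⟩ := quadratic_root_bounds (by linarith) (by linarith) hu hs (hroot u hq)
    have hupper : scale t J * u ^ 2 < 6 * (scale t m)⁻¹ := by nlinarith [sq_nonneg u]
    have hlower : (scale t m)⁻¹ < 6 * (scale t J * u ^ 2) := by nlinarith [sq_nonneg u]
    have hQQ := mul_inv_cancel₀ hQ.ne'
    constructor <;> nlinarith [mul_lt_mul_of_pos_left hupper hQ, mul_lt_mul_of_pos_left hlower hQ]

lemma eq_of_common_root {τ : Fin k → ℤ} {m' J' : Fin k} (hσ : ∀ j, |σ j| ≤ 1)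
    (hτ : ∀ j, |τ j| ≤ 1) (h : SupportEnds σ m J) (h' : SupportEnds τ m' J')
    (ht : 64 * k ^ 2 ≤ t) (hu : 0 < u) (hσu : bumpSum t σ u = 0) (hτu : bumpSum t τ u = 0) :
    m = m' ∧ J = J' := by
  have ht64 : 64 ≤ t := by nlinarith [(by exact_mod_cast m.pos : (1 : ℝ) ≤ k)]
  have hb := h.root_scale_bounds hσ ht hu hσu
  have hb' := h'.root_scale_bounds hτ ht hu hτu
  rw [scale_mul_scale] at hb hb'
  obtain ⟨hm, hJ⟩ := four_pow_add_four_pow_inj h.le h'.le (eq_of_pow_mul_mem_Ioo ht64 hb hb')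
  exact ⟨Fin.ext hm, Fin.ext hJ⟩

end SupportEnds

lemma bumpSum_root_unique {k : ℕ} {σ : Fin k → ℤ} {t u v : ℝ} (hσ : ∀ j, |σ j| ≤ 1) (hσ₀ : σ ≠ 0)
    (ht : 64 * k ^ 2 ≤ t) (hu : 0 < u) (hv : 0 < v) (hqu : bumpSum t σ u = 0)
    (hqv : bumpSum t σ v = 0) : u = v := by
  obtain ⟨m, J, h⟩ := exists_supportEnds hσ₀
  exact h.root_unique hσ ht hu hv hqu hqv

section Cube

variable {k : ℕ} {t : ℝ}

def bitDiff (v w : Fin k → Fin 2) (j : Fin k) : ℤ := ((v j : ℕ) : ℤ) - (w j : ℕ)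

def cubeCurve (t : ℝ) (v : Fin k → Fin 2) (x : ℝ) : ℝ :=
  bumpSum t (fun j => (v j : ℕ)) (Real.exp x)

lemma abs_bitDiff_le (v w : Fin k → Fin 2) (j : Fin k) : |bitDiff v w j| ≤ 1 := by
  have := (v j).isLt
  have := (w j).isLt
  rw [bitDiff, abs_le]
  omega

lemma bitDiff_ne_zero {v w : Fin k → Fin 2} (h : v ≠ w) : bitDiff v w ≠ 0 := fun h0 =>
  h <| funext fun j => Fin.ext <| by simpa [bitDiff, sub_eq_zero] using congrFun h0 j

lemma continuous_cubeCurve (v : Fin k → Fin 2) : Continuous (cubeCurve t v) :=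
  (continuous_bumpSum _).comp Real.continuous_exp

lemma cubeCurve_sub (v w : Fin k → Fin 2) (x : ℝ) :
    cubeCurve t v x - cubeCurve t w x = bumpSum t (bitDiff v w) (Real.exp x) :=
  bumpSum_sub _ _ _

lemma cubeCurve_eq_iff {v w : Fin k → Fin 2} {x : ℝ} :
    cubeCurve t v x = cubeCurve t w x ↔ bumpSum t (bitDiff v w) (Real.exp x) = 0 := by
  rw [← cubeCurve_sub, sub_eq_zero]

lemma cubeCurve_inter_subsingleton (ht : 64 * k ^ 2 ≤ t) {v w : Fin k → Fin 2} (h : v ≠ w) :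
    {x | cubeCurve t v x = cubeCurve t w x}.Subsingleton := fun x hx y hy =>
  Real.exp_injective <| bumpSum_root_unique (abs_bitDiff_le v w) (bitDiff_ne_zero h) ht
    (Real.exp_pos x) (Real.exp_pos y) (cubeCurve_eq_iff.mp hx) (cubeCurve_eq_iff.mp hy)

lemma cubeCurve_injective (ht : 64 * k ^ 2 ≤ t) : Function.Injective (cubeCurve (k := k) t) :=
  fun _ _ hvw => by_contra fun h =>
    zero_ne_one (cubeCurve_inter_subsingleton ht h (congrFun hvw 0) (congrFun hvw 1))

/-- Three distinct vertices would have to first differ pairwise at the same coordinate, which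
is impossible for three bits. -/
lemma cubeCurve_no_triple_point (ht : 64 * k ^ 2 ≤ t) {v w z : Fin k → Fin 2} (hvw : v ≠ w)
    (hwz : w ≠ z) (hvz : v ≠ z) {x : ℝ} (h₁ : cubeCurve t v x = cubeCurve t w x)
    (h₂ : cubeCurve t w x = cubeCurve t z x) : False := by
  obtain ⟨m, J, e₁⟩ := exists_supportEnds (bitDiff_ne_zero hvw)
  obtain ⟨m₂, J₂, e₂⟩ := exists_supportEnds (bitDiff_ne_zero hwz)
  obtain ⟨m₃, J₃, e₃⟩ := exists_supportEnds (bitDiff_ne_zero hvz)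
  obtain ⟨rfl, -⟩ := e₁.eq_of_common_root (abs_bitDiff_le v w) (abs_bitDiff_le w z) e₂ ht
    (Real.exp_pos x) (cubeCurve_eq_iff.mp h₁) (cubeCurve_eq_iff.mp h₂)
  obtain ⟨rfl, -⟩ := e₁.eq_of_common_root (abs_bitDiff_le v w) (abs_bitDiff_le v z) e₃ ht
    (Real.exp_pos x) (cubeCurve_eq_iff.mp h₁) (cubeCurve_eq_iff.mp (h₁.trans h₂))
  have := e₁.left_ne_zero
  have := e₂.left_ne_zero
  have := e₃.left_ne_zero
  have := (v m).isLt
  have := (w m).isLt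
  have := (z m).isLt
  simp only [bitDiff] at *
  omega

lemma cubeCurve_update_sub {v : Fin k → Fin 2} {j : Fin k} (hv : v j = 0) (x : ℝ) :
    cubeCurve t (Function.update v j 1) x - cubeCurve t v x = bump t j (Real.exp x) := by
  rw [cubeCurve_sub, bumpSum, Fintype.sum_eq_single j fun i hi => by
    simp [bitDiff, Function.update_of_ne hi]]
  simp [bitDiff, hv]

lemma tangent_cubeCurve_update (ht : 0 < t) {v : Fin k → Fin 2} {j : Fin k} (hv : v j = 0) :
    Tangent (cubeCurve t v) (cubeCurve t (Function.update v j 1)) := by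
  have hiff : ∀ x, cubeCurve t v x = cubeCurve t (Function.update v j 1) x ↔
      Real.exp x = (scale t j)⁻¹ := fun x => by
    rw [eq_comm, ← sub_eq_zero, cubeCurve_update_sub hv, bump_eq_zero_iff ht]
  refine ⟨⟨Real.log (scale t j)⁻¹, (hiff _).mpr (Real.exp_log (inv_pos.mpr (scale_pos ht))),
    fun y hy => by rw [← (hiff y).mp hy, Real.log_exp]⟩, Or.inl fun x => ?_⟩
  rw [← sub_nonneg, cubeCurve_update_sub hv]
  exact bump_nonneg ht _

end Cube

lemma finFunctionFinEquiv_insertNth_one {K : ℕ} (j : Fin (K + 1)) (w : Fin K → Fin 2) :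
    (finFunctionFinEquiv (j.insertNth 1 w) : ℕ) =
      finFunctionFinEquiv (j.insertNth 0 w) + 2 ^ (j : ℕ) := by
  simp [Fin.sum_univ_succAbove _ j]
  ring

lemma le_ncard_cube_edges {k : ℕ} (R : (Fin k → Fin 2) → (Fin k → Fin 2) → Prop)
    (hR : ∀ v j, v j = 0 → R v (Function.update v j 1)) :
    k * 2 ^ (k - 1) ≤ {p : Fin (2 ^ k) × Fin (2 ^ k) | p.1 < p.2 ∧
      R (finFunctionFinEquiv.symm p.1) (finFunctionFinEquiv.symm p.2)}.ncard := by
  cases k with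
  | zero => simp
  | succ K =>
    let edge : Fin (K + 1) × (Fin K → Fin 2) → Fin (2 ^ (K + 1)) × Fin (2 ^ (K + 1)) :=
      fun p => (finFunctionFinEquiv (p.1.insertNth 0 p.2),
        finFunctionFinEquiv (p.1.insertNth 1 p.2))
    have hval : ∀ p, ((edge p).2 : ℕ) = (edge p).1 + 2 ^ (p.1 : ℕ) := fun p =>
      finFunctionFinEquiv_insertNth_one p.1 p.2
    have hinj : Function.Injective edge := by
      rintro ⟨j, w⟩ ⟨j', w'⟩ h
      have h₁ : ((edge (j, w)).2 : ℕ) = (edge (j, w)).1 + 2 ^ (j : ℕ) := hval (j, w)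
      have h₂ : ((edge (j', w')).2 : ℕ) = (edge (j', w')).1 + 2 ^ (j' : ℕ) := hval (j', w')
      rw [h] at h₁
      have hj : j = j' :=
        Fin.ext <| Nat.pow_right_injective le_rfl (show 2 ^ (j : ℕ) = 2 ^ (j' : ℕ) by omega)
      subst hj
      exact Prod.ext rfl (Fin.insertNth_right_injective _
        (finFunctionFinEquiv.injective (congrArg Prod.fst h)))
    have hsub : Set.range edge ⊆ {p | p.1 < p.2 ∧
        R (finFunctionFinEquiv.symm p.1) (finFunctionFinEquiv.symm p.2)} := by
      rintro _ ⟨⟨j, w⟩, rfl⟩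
      refine ⟨Fin.lt_def.mpr (by rw [hval]; simp), ?_⟩
      simp only [edge, Equiv.symm_apply_apply]
      rw [← Fin.update_insertNth (α := fun _ => Fin 2) j 0 1 w]
      exact hR _ j (by simp)
    calc (K + 1) * 2 ^ (K + 1 - 1) = Nat.card (Fin (K + 1) × (Fin K → Fin 2)) := by simp
      _ = (Set.range edge).ncard := (Set.ncard_range_of_injective hinj).symm
      _ ≤ _ := Set.ncard_le_ncard hsub

end

end TangentFamily

open TangentFamily in
theorem stmt8_general (k : ℕ) :
    ∃ f : Fin (2 ^ k) → ℝ → ℝ,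
      (∀ i, Continuous (f i)) ∧
      Function.Injective f ∧
      (∀ i j : Fin (2 ^ k), i ≠ j → {x : ℝ | f i x = f j x}.Subsingleton) ∧
      (¬ ∃ (x : ℝ) (i j l : Fin (2 ^ k)), i ≠ j ∧ j ≠ l ∧ i ≠ l ∧
        f i x = f j x ∧ f j x = f l x) ∧
      k * 2 ^ (k - 1) ≤
        {p : Fin (2 ^ k) × Fin (2 ^ k) | p.1 < p.2 ∧ Tangent (f p.1) (f p.2)}.ncard := by
  obtain ⟨t, ht, ht₀⟩ : ∃ t : ℝ, 64 * k ^ 2 ≤ t ∧ 0 < t :=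
    ⟨64 * k ^ 2 + 1, by linarith, by positivity⟩
  have hinj := (finFunctionFinEquiv (m := 2) (n := k)).symm.injective
  refine ⟨fun i => cubeCurve t (finFunctionFinEquiv.symm i), fun i => continuous_cubeCurve _,
    (cubeCurve_injective ht).comp hinj,
    fun _ _ hij => cubeCurve_inter_subsingleton ht (hinj.ne hij),
    ?_, le_ncard_cube_edges (fun v w => Tangent (cubeCurve t v) (cubeCurve t w))
      fun _ _ hv => tangent_cubeCurve_update ht₀ hv⟩
  rintro ⟨x, i, j, l, hij, hjl, hil, h₁, h₂⟩
  exact cubeCurve_no_triple_point ht (hinj.ne hij) (hinj.ne hjl) (hinj.ne hil) h₁ h₂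

theorem stmt8 (k : ℕ) (hk : 1 ≤ k) :
    ∃ f : Fin (2 ^ k) → ℝ → ℝ,
      (∀ i, Continuous (f i)) ∧
      Function.Injective f ∧
      (∀ i j : Fin (2 ^ k), i ≠ j → {x : ℝ | f i x = f j x}.Subsingleton) ∧
      (¬ ∃ (x : ℝ) (i j l : Fin (2 ^ k)), i ≠ j ∧ j ≠ l ∧ i ≠ l ∧
        f i x = f j x ∧ f j x = f l x) ∧
      k * 2 ^ (k - 1) ≤
        {p : Fin (2 ^ k) × Fin (2 ^ k) | p.1 < p.2 ∧ Tangent (f p.1) (f p.2)}.ncard :=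
  stmt8_general k
end
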